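/- arXiv:math/0111135 — 8 statements merged into one kernel-verified Lean document; each statement's English description precedes it below -/
import Mathlib

section
/- Let X ⊆ ℝ^r and U ⊆ ℝ^m be nonempty open sets and let β : X × U → ℝ be such that for each u ∈ U the map x ↦ β(x,u) is continuously differentiable on X. If x ∈ X is a nonsingular parameter value and q = ρ(x), then there exist an open neighborhood V ⊆ X of x and inputs u₁,…,u_q ∈ U such that for all x₁, x₂ ∈ V: if β(x₁,uᵢ) = β(x₂,uᵢ) for all i = 1,…,q, then β(x₁,u) = β(x₂,u) for every u ∈ U. -/
open Module Submodule Metric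

set_option maxHeartbeats 1000000

lemma span_proj_top (q : ℕ) :
    span ℝ (Set.range fun i : Fin q => (LinearMap.proj i : (Fin q → ℝ) →ₗ[ℝ] ℝ)) = ⊤ := by
  rw [eq_top_iff]
  intro f _
  have : f = ∑ i : Fin q, f (Pi.single i 1) • (LinearMap.proj i : (Fin q → ℝ) →ₗ[ℝ] ℝ) := by
    apply Basis.ext (Pi.basisFun ℝ (Fin q))
    intro j
    simp [Pi.basisFun_apply, Pi.single_apply]
  rw [this]
  exact Submodule.sum_mem _ fun i _ => smul_mem _ _ (subset_span ⟨i, rfl⟩)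

lemma finrank_range_pi {E : Type*} [AddCommGroup E] [Module ℝ E] [FiniteDimensional ℝ E]
    {q : ℕ} (φ : Fin q → (E →ₗ[ℝ] ℝ)) :
    finrank ℝ (LinearMap.range (LinearMap.pi φ)) = finrank ℝ (span ℝ (Set.range φ)) := by
  rw [← LinearMap.finrank_range_dualMap_eq_finrank_range (LinearMap.pi φ)]
  have h : LinearMap.range (LinearMap.pi φ).dualMap = span ℝ (Set.range φ) := by
    rw [LinearMap.range_eq_map, ← span_proj_top q, Submodule.map_span, ← Set.range_comp]
    have : ((LinearMap.pi φ).dualMap ∘ fun i : Fin q =>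
        (LinearMap.proj i : (Fin q → ℝ) →ₗ[ℝ] ℝ)) = φ := by
      funext i
      ext e
      simp [LinearMap.dualMap_apply]
    rw [this]
  rw [h]

lemma rank_fderiv_pi_eq {E : Type*} [NormedAddCommGroup E] [NormedSpace ℝ E]
    [FiniteDimensional ℝ E] {q : ℕ} {f : Fin q → E → ℝ} {ξ : E}
    (h : ∀ i, DifferentiableAt ℝ (f i) ξ) :
    finrank ℝ (LinearMap.range (fderiv ℝ (fun ζ => fun i => f i ζ) ξ).toLinearMap)
      = finrank ℝ (span ℝ (Set.range fun i => (fderiv ℝ (f i) ξ).toLinearMap)) := by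
  rw [fderiv_pi h]
  have : (ContinuousLinearMap.pi fun i => fderiv ℝ (f i) ξ).toLinearMap
      = LinearMap.pi fun i => (fderiv ℝ (f i) ξ).toLinearMap := rfl
  rw [this, finrank_range_pi]

/-- At a nonsingular parameter value `x` with maximal rank `q = ρ(x)`, there are a
neighborhood `V` of `x` in `X` and `q` inputs `u₁, …, u_q ∈ U` which form a universal
distinguishing set for the parameters in `V`. -/
theorem local_distinguishing_set_at_nonsingular_parameter
    (r m : ℕ)
    (X : Set (EuclideanSpace ℝ (Fin r))) (U : Set (EuclideanSpace ℝ (Fin m)))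
    (hXopen : IsOpen X) (hXne : X.Nonempty)
    (hUopen : IsOpen U) (hUne : U.Nonempty)
    (β : EuclideanSpace ℝ (Fin r) × EuclideanSpace ℝ (Fin m) → ℝ)
    (hβ : ∀ u ∈ U, ContDiffOn ℝ 1 (fun x => β (x, u)) X)
    (ρ : EuclideanSpace ℝ (Fin r) → ℕ)
    (hρ : ∀ x, ρ x = sSup {nn : ℕ | ∃ q : ℕ, 0 < q ∧
      ∃ w : Fin q → EuclideanSpace ℝ (Fin m), (∀ i, w i ∈ U) ∧
        nn = Module.finrank ℝ
          (LinearMap.range (fderiv ℝ (fun ξ => fun i => β (ξ, w i)) x).toLinearMap)})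
    (x : EuclideanSpace ℝ (Fin r)) (hx : x ∈ X)
    (hns : ∃ V : Set (EuclideanSpace ℝ (Fin r)),
      IsOpen V ∧ x ∈ V ∧ V ⊆ X ∧ ∀ ξ ∈ V, ρ ξ = ρ x) :
    ∃ V : Set (EuclideanSpace ℝ (Fin r)), IsOpen V ∧ x ∈ V ∧ V ⊆ X ∧
      ∃ w : Fin (ρ x) → EuclideanSpace ℝ (Fin m), (∀ i, w i ∈ U) ∧
        ∀ x₁ ∈ V, ∀ x₂ ∈ V,
          (∀ i, β (x₁, w i) = β (x₂, w i)) → ∀ u ∈ U, β (x₁, u) = β (x₂, u) := by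
  classical
  obtain ⟨V₁, hV₁o, hxV₁, hV₁X, hρV₁⟩ := hns
  set k := ρ x with hk
  -- the rank sets
  set T : EuclideanSpace ℝ (Fin r) → Set ℕ := fun ξ : EuclideanSpace ℝ (Fin r) => {nn : ℕ | ∃ q : ℕ, 0 < q ∧
      ∃ w : Fin q → EuclideanSpace ℝ (Fin m), (∀ i, w i ∈ U) ∧
        nn = Module.finrank ℝ
          (LinearMap.range (fderiv ℝ (fun ζ => fun i => β (ζ, w i)) ξ).toLinearMap)}
    with hT
  have hρT : ∀ ξ, ρ ξ = sSup (T ξ) := hρ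
  -- differentiability of each slice on X
  have hdiff : ∀ u ∈ U, ∀ ξ ∈ X, DifferentiableAt ℝ (fun ζ => β (ζ, u)) ξ := fun u hu ξ hξ =>
    (((hβ u hu).differentiableOn one_ne_zero).differentiableAt (hXopen.mem_nhds hξ))
  -- rows
  set S : EuclideanSpace ℝ (Fin r) → EuclideanSpace ℝ (Fin m) → (EuclideanSpace ℝ (Fin r) →ₗ[ℝ] ℝ) := fun ξ u => (fderiv ℝ (fun ζ => β (ζ, u)) ξ).toLinearMap
    with hS
  have hbdd : ∀ ξ, BddAbove (T ξ) := by
    intro ξ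
    refine ⟨r, ?_⟩
    rintro nn ⟨q, hq, w, hw, rfl⟩
    calc finrank ℝ (LinearMap.range (fderiv ℝ (fun ζ => fun i => β (ζ, w i)) ξ).toLinearMap)
        ≤ finrank ℝ (EuclideanSpace ℝ (Fin r)) := LinearMap.finrank_range_le _
      _ = r := finrank_euclideanSpace_fin
  have hTne : ∀ ξ, (T ξ).Nonempty := by
    intro ξ
    obtain ⟨u₀, hu₀⟩ := hUne
    exact ⟨_, 1, one_pos, fun _ => u₀, fun _ => hu₀, rfl⟩
  have hle : ∀ ξ ∈ V₁, ∀ nn ∈ T ξ, nn ≤ k := by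
    intro ξ hξ nn hnn
    have := le_csSup (hbdd ξ) hnn
    rwa [← hρT, hρV₁ ξ hξ] at this
  -- the sup is attained at x
  have hmem : k ∈ T x := by
    rw [hk, hρT]
    exact Nat.sSup_mem (hTne x) (hbdd x)
  -- extract an independent family of size k
  obtain ⟨q₀, hq₀, w₀, hw₀U, hw₀r⟩ := hmem
  have hrows : k = finrank ℝ (span ℝ (Set.range fun i => S x (w₀ i))) := by
    rw [hw₀r, rank_fderiv_pi_eq (fun i => hdiff (w₀ i) (hw₀U i) x hx)]
  obtain ⟨b, hbsub, hbspan, hbind⟩ :=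
    exists_linearIndependent ℝ (Set.range fun i => S x (w₀ i))
  have hbfin : b.Finite := Set.Finite.subset (Set.finite_range _) hbsub
  have : Fintype b := hbfin.fintype
  have hbcard : Fintype.card b = k := by
    have h1 := finrank_span_eq_card hbind
    rw [Subtype.range_coe] at h1
    rw [hrows, ← hbspan]
    exact h1.symm
  let e : Fin k → b := (Fintype.equivFinOfCardEq hbcard).symm
  have hchoice : ∀ φ : b, ∃ u, u ∈ U ∧ S x u = (φ : EuclideanSpace ℝ (Fin r) →ₗ[ℝ] ℝ) := by
    rintro ⟨φ, hφ⟩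
    obtain ⟨i, hi⟩ := hbsub hφ
    exact ⟨w₀ i, hw₀U i, hi⟩
  choose wv hwvU hwvS using hchoice
  set w : Fin k → EuclideanSpace ℝ (Fin m) := fun j => wv (e j) with hw
  have hwU : ∀ j, w j ∈ U := fun j => hwvU (e j)
  have hwrow : (fun j => S x (w j)) = fun j => ((e j : b) : EuclideanSpace ℝ (Fin r) →ₗ[ℝ] ℝ) := by
    funext j; exact hwvS (e j)
  have hwind : LinearIndependent ℝ (fun j => S x (w j)) := by
    rw [hwrow]
    exact hbind.comp e (Fintype.equivFinOfCardEq hbcard).symm.injective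
  -- the map F and its derivative
  set F : EuclideanSpace ℝ (Fin r) → (Fin k → ℝ) := fun ζ => fun i => β (ζ, w i) with hF
  have hFcd : ContDiffOn ℝ 1 F X := contDiffOn_pi.2 fun i => hβ _ (hwU i)
  have hFdiff : ∀ ξ ∈ X, DifferentiableAt ℝ F ξ :=
    fun ξ hξ => ((hFcd.differentiableOn one_ne_zero).differentiableAt (hXopen.mem_nhds hξ))
  have hFpi : ∀ ξ ∈ X, fderiv ℝ F ξ
      = ContinuousLinearMap.pi (fun i => fderiv ℝ (fun ζ => β (ζ, w i)) ξ) :=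
    fun ξ hξ => fderiv_pi (fun i => hdiff (w i) (hwU i) ξ hξ)
  have hrank_eq : ∀ ξ ∈ X, finrank ℝ (LinearMap.range (fderiv ℝ F ξ).toLinearMap)
      = finrank ℝ (span ℝ (Set.range fun i => S ξ (w i))) :=
    fun ξ hξ => rank_fderiv_pi_eq (fun i => hdiff (w i) (hwU i) ξ hξ)
  set A : EuclideanSpace ℝ (Fin r) →L[ℝ] (Fin k → ℝ) := fderiv ℝ F x with hA
  have hAsurj : LinearMap.range A.toLinearMap = ⊤ := by
    apply Submodule.eq_top_of_finrank_eq
    rw [hrank_eq x hx, finrank_span_eq_card hwind, Fintype.card_fin,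
      Module.finrank_pi, Fintype.card_fin]
  -- a right inverse of A
  obtain ⟨M₀, hM₀⟩ := A.toLinearMap.exists_rightInverse_of_surjective hAsurj
  set M : (Fin k → ℝ) →L[ℝ] EuclideanSpace ℝ (Fin r) := M₀.toContinuousLinearMap with hM
  have hAM : A.comp M = ContinuousLinearMap.id ℝ (Fin k → ℝ) := by
    ext1 v
    have := LinearMap.congr_fun hM₀ v
    simpa [hM] using this
  -- the set where the derivative of F is surjective is open
  have hfdcont : ContinuousOn (fun ξ => fderiv ℝ F ξ) X :=
    hFcd.continuousOn_fderiv_of_isOpen hXopen le_rfl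
  have hdetcont : ContinuousOn (fun ξ => ((fderiv ℝ F ξ).comp M).det) X := by
    apply ContinuousLinearMap.continuous_det.comp_continuousOn
    exact hfdcont.clm_comp continuousOn_const
  set V₂ : Set (EuclideanSpace ℝ (Fin r)) := X ∩ (fun ξ => ((fderiv ℝ F ξ).comp M).det) ⁻¹' {0}ᶜ
    with hV₂
  have hV₂o : IsOpen V₂ := hdetcont.isOpen_inter_preimage hXopen (isOpen_compl_singleton)
  have hxV₂ : x ∈ V₂ := by
    constructor
    · exact hx
    · show ¬ ((fderiv ℝ F x).comp M).det = 0
      rw [← hA, hAM]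
      simp [ContinuousLinearMap.det]
  have hV₂surj : ∀ ξ ∈ V₂, Function.Surjective (fderiv ℝ F ξ) := by
    rintro ξ ⟨hξX, hξdet⟩
    have hdet : LinearMap.det ((fderiv ℝ F ξ).comp M).toLinearMap ≠ 0 := hξdet
    have hsurj2 : Function.Surjective (((fderiv ℝ F ξ).comp M).toLinearMap) :=
      (LinearMap.equivOfDetNeZero _ hdet).surjective
    intro y
    obtain ⟨v, hv⟩ := hsurj2 y
    exact ⟨M v, hv⟩
  -- rows stay independent and spanning on V₃
  set V₃ : Set (EuclideanSpace ℝ (Fin r)) := V₁ ∩ V₂ with hV₃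
  have hV₃o : IsOpen V₃ := hV₁o.inter hV₂o
  have hxV₃ : x ∈ V₃ := ⟨hxV₁, hxV₂⟩
  have hV₃X : V₃ ⊆ X := fun ξ hξ => hξ.2.1
  have hV₃ind : ∀ ξ ∈ V₃, LinearIndependent ℝ (fun i => S ξ (w i)) := by
    rintro ξ ⟨hξ₁, hξ₂⟩
    rw [linearIndependent_iff_card_eq_finrank_span, Fintype.card_fin]
    show k = finrank ℝ (span ℝ (Set.range fun i => S ξ (w i)))
    rw [← hrank_eq ξ hξ₂.1]
    have : LinearMap.range (fderiv ℝ F ξ).toLinearMap = ⊤ :=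
      LinearMap.range_eq_top.2 (hV₂surj ξ hξ₂)
    rw [this, finrank_top, Module.finrank_pi, Fintype.card_fin]
  -- key: every gradient lies in the span of the chosen rows, throughout V₃
  have hkey : ∀ ξ ∈ V₃, ∀ u ∈ U, S ξ u ∈ span ℝ (Set.range fun i => S ξ (w i)) := by
    rintro ξ hξV₃ u hu
    by_contra hnot
    set w' : Fin (k+1) → EuclideanSpace ℝ (Fin m) := Fin.snoc w u with hw'
    have hw'U : ∀ i, w' i ∈ U := by
      intro i
      refine Fin.lastCases ?_ ?_ i
      · simpa [hw'] using hu
      · intro j; simpa [hw'] using hwU j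
    have hsnoc : LinearIndependent ℝ (Fin.snoc (fun i => S ξ (w i)) (S ξ u) :
        Fin (k+1) → _) :=
      linearIndependent_fin_snoc.2 ⟨hV₃ind ξ hξV₃, hnot⟩
    have hcomp : (fun i : Fin (k+1) => S ξ (w' i))
        = Fin.snoc (fun i => S ξ (w i)) (S ξ u) := by
      funext i
      refine Fin.lastCases ?_ ?_ i
      · simp [hw']
      · intro j; simp [hw']
    have hmem' : finrank ℝ (LinearMap.range
        (fderiv ℝ (fun ζ => fun i : Fin (k+1) => β (ζ, w' i)) ξ).toLinearMap)
        ∈ T ξ := ⟨k+1, Nat.succ_pos _, w', hw'U, rfl⟩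
    have hval : finrank ℝ (LinearMap.range
        (fderiv ℝ (fun ζ => fun i : Fin (k+1) => β (ζ, w' i)) ξ).toLinearMap)
        = k + 1 := by
      rw [rank_fderiv_pi_eq (fun i => hdiff _ (hw'U i) ξ (hV₃X hξV₃))]
      rw [hcomp, finrank_span_eq_card hsnoc, Fintype.card_fin]
    have := hle ξ hξV₃.1 _ hmem'
    rw [hval] at this
    omega
  -- Inverse function theorem setup
  set K : Submodule ℝ (EuclideanSpace ℝ (Fin r)) := LinearMap.ker A.toLinearMap with hK
  set projK : EuclideanSpace ℝ (Fin r) →L[ℝ] K := orthogonalProjection K with hprojK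
  set ψ : EuclideanSpace ℝ (Fin r) → (Fin k → ℝ) × K := fun ζ => (F ζ, projK ζ) with hψ
  set B : EuclideanSpace ℝ (Fin r) →L[ℝ] (Fin k → ℝ) × K := A.prod projK with hB
  have hBker : LinearMap.ker B.toLinearMap = ⊥ := by
    rw [Submodule.eq_bot_iff]
    intro ζ hζ
    have h1 : A ζ = 0 := congrArg Prod.fst hζ
    have h2 : projK ζ = 0 := congrArg Prod.snd hζ
    have hζK : ζ ∈ K := h1
    have := orthogonalProjection_mem_subspace_eq_self (K := K) ⟨ζ, hζK⟩
    rw [show ((⟨ζ, hζK⟩ : K) : EuclideanSpace ℝ (Fin r)) = ζ from rfl] at this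
    have : projK ζ = ⟨ζ, hζK⟩ := this
    rw [h2] at this
    have := congrArg Subtype.val this
    exact this.symm
  have hfinK : finrank ℝ K = r - k := by
    have hrn := LinearMap.finrank_range_add_finrank_ker A.toLinearMap
    rw [hAsurj, finrank_top, Module.finrank_pi, Fintype.card_fin,
      finrank_euclideanSpace_fin] at hrn
    have hkk : LinearMap.ker A.toLinearMap = K := rfl
    rw [hkk] at hrn
    omega
  have hkler : k ≤ r := by
    have h1 : k = finrank ℝ (LinearMap.range A.toLinearMap) := by
      rw [hAsurj, finrank_top, Module.finrank_pi, Fintype.card_fin]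
    have h2 := LinearMap.finrank_range_le A.toLinearMap
    rw [← h1, finrank_euclideanSpace_fin] at h2
    exact h2
  have hBrange : LinearMap.range B.toLinearMap = ⊤ := by
    apply Submodule.eq_top_of_finrank_eq
    have hrn := LinearMap.finrank_range_add_finrank_ker B.toLinearMap
    have hkk : LinearMap.ker B.toLinearMap = LinearMap.ker B.toLinearMap := rfl
    have hrr : LinearMap.range B.toLinearMap = LinearMap.range B.toLinearMap := rfl
    rw [hkk, hrr, hBker, finrank_bot, finrank_euclideanSpace_fin] at hrn
    rw [Module.finrank_prod, Module.finrank_pi, Fintype.card_fin, hfinK]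
    omega
  set Beq : EuclideanSpace ℝ (Fin r) ≃L[ℝ] (Fin k → ℝ) × K :=
    ContinuousLinearEquiv.ofBijective B hBker hBrange with hBeq
  have hψcd : ContDiffAt ℝ 1 ψ x :=
    ((hFcd.contDiffAt (hXopen.mem_nhds hx)).prodMk (projK.contDiff.contDiffAt))
  have hψd : HasFDerivAt ψ (Beq : EuclideanSpace ℝ (Fin r) →L[ℝ] (Fin k → ℝ) × K) x := by
    have h1 : HasFDerivAt F A x := (hFdiff x hx).hasFDerivAt
    have h2 := h1.prodMk projK.hasFDerivAt
    rw [hBeq, ContinuousLinearEquiv.coe_ofBijective, hB]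
    exact h2
  have hstrict : HasStrictFDerivAt ψ
      (Beq : EuclideanSpace ℝ (Fin r) →L[ℝ] (Fin k → ℝ) × K) x :=
    hψcd.hasStrictFDerivAt' hψd one_ne_zero
  set σ : (Fin k → ℝ) × K → EuclideanSpace ℝ (Fin r) := hstrict.localInverse ψ Beq x
    with hσ
  have hσcd : ContDiffAt ℝ 1 σ (ψ x) := hψcd.to_localInverse hψd one_ne_zero
  have hσψx : σ (ψ x) = x := hstrict.localInverse_apply_image
  -- neighborhoods on the target side
  have e₁ : ∀ᶠ p in nhds (ψ x), ψ (σ p) = p := hstrict.eventually_right_inverse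
  have e₂ : ∀ᶠ p in nhds (ψ x), σ p ∈ V₃ := by
    have hcont : ContinuousAt σ (ψ x) := hσcd.continuousAt
    have : V₃ ∈ nhds (σ (ψ x)) := by rw [hσψx]; exact hV₃o.mem_nhds hxV₃
    exact hcont this
  obtain ⟨N₃, hN₃nhds, hN₃cd⟩ := hσcd.contDiffOn le_rfl (by simp)
  have hN : {p | ψ (σ p) = p} ∩ {p | σ p ∈ V₃} ∩ N₃ ∈ nhds (ψ x) :=
    Filter.inter_mem (Filter.inter_mem e₁ e₂) hN₃nhds
  obtain ⟨ε, hε, hball⟩ := Metric.mem_nhds_iff.mp hN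
  set Q : Set ((Fin k → ℝ) × K) := ball (F x) ε ×ˢ ball (projK x) ε with hQ
  have hQsub : Q ⊆ {p | ψ (σ p) = p} ∩ {p | σ p ∈ V₃} ∩ N₃ := by
    rw [hQ, ball_prod_same]
    exact fun p hp => hball hp
  have hQopen : IsOpen Q := (isOpen_ball).prod (isOpen_ball)
  have hψxQ : ψ x ∈ Q := ⟨mem_ball_self hε, mem_ball_self hε⟩
  have hQ₁ : ∀ p ∈ Q, ψ (σ p) = p := fun p hp => (hQsub hp).1.1
  have hQ₂ : ∀ p ∈ Q, σ p ∈ V₃ := fun p hp => (hQsub hp).1.2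
  have hQdiff : ∀ p ∈ Q, DifferentiableAt ℝ σ p := by
    intro p hp
    have : ContDiffOn ℝ 1 σ Q := hN₃cd.mono (fun p hp => (hQsub hp).2)
    exact (this.differentiableOn one_ne_zero).differentiableAt (hQopen.mem_nhds hp)
  -- neighborhood on the source side
  have e₀ : ∀ᶠ ζ in nhds x, σ (ψ ζ) = ζ := hstrict.eventually_left_inverse
  obtain ⟨N₀, hN₀nhds, hN₀⟩ := e₀.exists_mem
  have hψcont : ContinuousOn ψ X := (hFcd.continuousOn).prodMk (projK.continuous.continuousOn)
  set V : Set (EuclideanSpace ℝ (Fin r)) := (V₃ ∩ ψ ⁻¹' Q) ∩ interior N₀ with hV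
  have hVo : IsOpen V :=
    (hψcont.mono (fun ζ hζ => hV₃X hζ) |>.isOpen_inter_preimage hV₃o hQopen).inter isOpen_interior
  have hxV : x ∈ V := ⟨⟨hxV₃, hψxQ⟩, mem_interior_iff_mem_nhds.2 hN₀nhds⟩
  have hVX : V ⊆ X := fun ζ hζ => hV₃X hζ.1.1
  refine ⟨V, hVo, hxV, hVX, w, hwU, ?_⟩
  intro x₁ hx₁ x₂ hx₂ hβeq u hu
  obtain ⟨⟨hx₁V₃, hx₁Q⟩, hx₁N₀⟩ := hx₁
  obtain ⟨⟨hx₂V₃, hx₂Q⟩, hx₂N₀⟩ := hx₂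
  have hσx₁ : σ (ψ x₁) = x₁ := hN₀ x₁ (interior_subset hx₁N₀)
  have hσx₂ : σ (ψ x₂) = x₂ := hN₀ x₂ (interior_subset hx₂N₀)
  have hFx : F x₁ = F x₂ := funext hβeq
  set c : Fin k → ℝ := F x₁ with hc
  set h : K → ℝ := fun z => β (σ (c, z), u) with hh
  have hc_ball : c ∈ ball (F x) ε := hx₁Q.1
  have hz₁ : (projK x₁ : K) ∈ ball (projK x) ε := hx₁Q.2
  have hz₂ : (projK x₂ : K) ∈ ball (projK x) ε := hx₂Q.2
  set inrK : K →L[ℝ] ((Fin k → ℝ) × K) := ContinuousLinearMap.inr ℝ (Fin k → ℝ) K with hinr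
  have hderiv : ∀ z ∈ ball (projK x) ε, HasFDerivWithinAt h (0 : K →L[ℝ] ℝ)
      (ball (projK x) ε) z := by
    intro z hz
    have hpQ : ((c, z) : (Fin k → ℝ) × K) ∈ Q := ⟨hc_ball, hz⟩
    set ξ := σ (c, z) with hξ
    have hξV₃ : ξ ∈ V₃ := hQ₂ _ hpQ
    have hξX : ξ ∈ X := hV₃X hξV₃
    have hσdiff : DifferentiableAt ℝ σ (c, z) := hQdiff _ hpQ
    set D := fderiv ℝ σ (c, z) with hD
    have hADfst : (fderiv ℝ F ξ).comp D
        = ContinuousLinearMap.fst ℝ (Fin k → ℝ) K := by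
      have h₁ : HasFDerivAt (F ∘ σ) ((fderiv ℝ F ξ).comp D) ((c, z) : (Fin k → ℝ) × K) :=
        HasFDerivAt.comp ((c, z) : (Fin k → ℝ) × K)
          (hFdiff ξ hξX).hasFDerivAt hσdiff.hasFDerivAt
      have heq : (F ∘ σ) =ᶠ[nhds ((c, z) : (Fin k → ℝ) × K)] Prod.fst := by
        filter_upwards [hQopen.mem_nhds hpQ] with p hp
        exact congrArg Prod.fst (hQ₁ p hp)
      have h₂ : HasFDerivAt (F ∘ σ) (ContinuousLinearMap.fst ℝ (Fin k → ℝ) K)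
          ((c, z) : (Fin k → ℝ) × K) :=
        hasFDerivAt_fst.congr_of_eventuallyEq heq
      exact h₁.unique h₂
    have hmk : HasFDerivAt (fun z' : K => ((c, z') : (Fin k → ℝ) × K))
        inrK z := hasFDerivAt_prodMk_right c z
    have hσz : HasFDerivAt (fun z' : K => σ (c, z'))
        (D.comp inrK) z :=
      hσdiff.hasFDerivAt.comp z hmk
    have hβξ : HasFDerivAt (fun ζ => β (ζ, u)) (fderiv ℝ (fun ζ => β (ζ, u)) ξ) ξ :=
      (hdiff u hu ξ hξX).hasFDerivAt
    have hhd : HasFDerivAt h ((fderiv ℝ (fun ζ => β (ζ, u)) ξ).comp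
        (D.comp inrK)) z := by rw [hh]; exact hβξ.comp z hσz
    have hzero : (fderiv ℝ (fun ζ => β (ζ, u)) ξ).comp
        (D.comp inrK) = 0 := by
      ext v
      have hvec : (fderiv ℝ F ξ) (D (inrK v)) = 0 := by
        have h5 := DFunLike.congr_fun hADfst (inrK v)
        simpa [hinr] using h5
      have hvec' : ∀ i, S ξ (w i) (D (inrK v)) = 0 := by
        intro i
        have h6 := congrFun hvec i
        rw [hFpi ξ hξX] at h6
        simpa [hS] using h6
      obtain ⟨cf, hcf⟩ := (mem_span_range_iff_exists_fun ℝ).1 (hkey ξ hξV₃ u hu)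
      have h7 := LinearMap.congr_fun hcf (D (inrK v))
      rw [LinearMap.sum_apply] at h7
      simp only [LinearMap.smul_apply] at h7
      have h8 : (∑ i, cf i • S ξ (w i) (D (inrK v)))
          = 0 := by
        rw [Finset.sum_eq_zero]
        intro i _
        rw [hvec' i, smul_zero]
      rw [h8] at h7
      simpa [hS] using h7.symm
    rw [hzero] at hhd
    exact hhd.hasFDerivWithinAt
  have hconv : Convex ℝ (ball ((projK x : K)) ε) := convex_ball _ _
  have hbound : ∀ z ∈ ball ((projK x : K)) ε, ‖(0 : K →L[ℝ] ℝ)‖ ≤ 0 := by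
    intro z _
    exact le_of_eq ContinuousLinearMap.opNorm_zero
  have hest := hconv.norm_image_sub_le_of_norm_hasFDerivWithin_le hderiv hbound hz₁ hz₂
  rw [zero_mul] at hest
  have heq0 : h (projK x₂) = h (projK x₁) := sub_eq_zero.mp (norm_le_zero_iff.mp hest)
  have h1 : h (projK x₁) = β (x₁, u) := by
    have hpair : ((c, (projK x₁ : K)) : (Fin k → ℝ) × K) = ψ x₁ := rfl
    show β (σ (c, projK x₁), u) = β (x₁, u)
    rw [hpair, hσx₁]
  have h2 : h (projK x₂) = β (x₂, u) := by
    have hpair : ((c, (projK x₂ : K)) : (Fin k → ℝ) × K) = ψ x₂ := by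
      rw [hψ]
      exact Prod.ext hFx rfl
    show β (σ (c, projK x₂), u) = β (x₂, u)
    rw [hpair, hσx₂]
  rw [← h1, ← h2, heq0]
end

section
/- Let X ⊆ ℝ^r and U ⊆ ℝ^m be nonempty open sets and let β : X × U → ℝ be such that for each u ∈ U the map x ↦ β(x,u) is continuously differentiable on X. Then there exists an open dense subset X₀ of X with the following property: for each x ∈ X₀ there exist an open neighborhood V ⊆ X of x and r pairwise distinct inputs u₁,…,u_r ∈ U such that for all x₁, x₂ ∈ V, if β(x₁,uᵢ) = β(x₂,uᵢ) for all i = 1,…,r, then β(x₁,u) = β(x₂,u) for every u ∈ U. -/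
open Metric Set ContinuousLinearMap

open Submodule in
lemma aux_pi_surjective {E : Type*} [AddCommGroup E] [Module ℝ E] {k : ℕ}
    (f : Fin k → (E →ₗ[ℝ] ℝ)) (hf : LinearIndependent ℝ f) :
    Function.Surjective (LinearMap.pi f) := by
  rw [← LinearMap.range_eq_top]
  by_contra hne
  obtain ⟨φ, hφ0, hφ⟩ := Submodule.exists_dual_map_eq_bot_of_lt_top
    (lt_top_iff_ne_top.2 hne) inferInstance
  have hphi : ∀ v : Fin k → ℝ, φ v = ∑ i, v i * φ (Pi.single i 1) := by
    intro v
    have hv : v = ∑ i, v i • (Pi.single i (1:ℝ) : Fin k → ℝ) := by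
      ext j; simp [Finset.sum_apply, Pi.single_apply]
    conv_lhs => rw [hv]
    simp [mul_comm]
  have hcomp : ∀ x : E, ∑ i, φ (Pi.single i 1) * f i x = 0 := by
    intro x
    have hx : (LinearMap.pi f) x ∈ LinearMap.range (LinearMap.pi f) :=
      LinearMap.mem_range_self _ x
    have : φ ((LinearMap.pi f) x) = 0 := by
      have := Submodule.mem_map_of_mem (f := φ) hx
      rw [hφ] at this
      simpa using this
    rw [hphi] at this
    simpa [LinearMap.pi_apply, mul_comm] using this
  have hall : ∀ i, φ (Pi.single i 1) = 0 := by
    have := Fintype.linearIndependent_iff.1 hf (fun i => φ (Pi.single i 1)) ?_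
    · exact this
    · ext x
      simpa [LinearMap.smul_apply, Finset.sum_apply] using hcomp x
  apply hφ0
  apply LinearMap.ext
  intro v
  rw [hphi]
  simp [hall]

set_option maxHeartbeats 1000000 in
lemma aux_core {r k : ℕ} {X : Set (EuclideanSpace ℝ (Fin r))} (hX : IsOpen X)
    {x : EuclideanSpace ℝ (Fin r)} (hx : x ∈ X)
    (f : Fin k → EuclideanSpace ℝ (Fin r) → ℝ) (hf : ∀ i, ContDiffOn ℝ 1 (f i) X)
    (hind : LinearIndependent ℝ (fun i => fderiv ℝ (f i) x))
    (F : Set (EuclideanSpace ℝ (Fin r) → ℝ))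
    (hF : ∀ g ∈ F, ContDiffOn ℝ 1 g X)
    (hspan : ∀ᶠ y in nhds x, ∀ g ∈ F,
      fderiv ℝ g y ∈ Submodule.span ℝ (Set.range fun i => fderiv ℝ (f i) y)) :
    ∃ V, IsOpen V ∧ x ∈ V ∧ V ⊆ X ∧
      ∀ x₁ ∈ V, ∀ x₂ ∈ V, (∀ i, f i x₁ = f i x₂) → ∀ g ∈ F, g x₁ = g x₂ := by
  classical
  -- derivatives
  have hdiff : ∀ i, ∀ y ∈ X, HasFDerivAt (f i) (fderiv ℝ (f i) y) y := fun i y hy =>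
    (((hf i).contDiffAt (hX.mem_nhds hy)).differentiableAt one_ne_zero).hasFDerivAt
  set Φ : EuclideanSpace ℝ (Fin r) → (Fin k → ℝ) := fun y i => f i y with hΦdef
  set DΦ : EuclideanSpace ℝ (Fin r) → (EuclideanSpace ℝ (Fin r) →L[ℝ] (Fin k → ℝ)) := fun y : EuclideanSpace ℝ (Fin r) => ContinuousLinearMap.pi (fun i => fderiv ℝ (f i) y) with hDΦdef
  have hΦat : ∀ y ∈ X, HasFDerivAt Φ (DΦ y) y := fun y hy => by
    rw [hΦdef, hDΦdef]
    exact hasFDerivAt_pi.2 fun i => hdiff i y hy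
  set K : Submodule ℝ (EuclideanSpace ℝ (Fin r)) := LinearMap.ker (DΦ x : EuclideanSpace ℝ (Fin r) →ₗ[ℝ] (Fin k → ℝ)) with hKdef
  haveI : CompleteSpace K := FiniteDimensional.complete ℝ _
  set P : EuclideanSpace ℝ (Fin r) →L[ℝ] K := Submodule.orthogonalProjection K with hPdef
  set G : EuclideanSpace ℝ (Fin r) → (Fin k → ℝ) × K := fun y => (Φ y, P y) with hGdef
  set DG : EuclideanSpace ℝ (Fin r) → (EuclideanSpace ℝ (Fin r) →L[ℝ] ((Fin k → ℝ) × K)) := fun y => (DΦ y).prod P with hDGdef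
  have hGat : ∀ y ∈ X, HasFDerivAt G (DG y) y := fun y hy =>
    (hΦat y hy).prodMk (P.hasFDerivAt)
  -- the derivative at x is a linear equivalence
  have hinj : Function.Injective (DG x) := by
    intro v w hvw
    have h1 : DΦ x (v - w) = 0 := by
      have := congrArg Prod.fst hvw
      simp only [hDGdef, ContinuousLinearMap.prod_apply] at this
      simp [map_sub, this, sub_eq_zero]
    have hmem : v - w ∈ K := h1
    have h2 : P (v - w) = 0 := by
      have := congrArg Prod.snd hvw
      simp only [hDGdef, ContinuousLinearMap.prod_apply] at this
      simp [map_sub, this, sub_eq_zero]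
    have := Submodule.orthogonalProjection_mem_subspace_eq_self (K := K) ⟨v - w, hmem⟩
    rw [hPdef] at h2
    rw [h2] at this
    have : v - w = 0 := by simpa using congrArg Subtype.val this.symm
    exact sub_eq_zero.1 this
  -- dimension count
  have hsurj : Function.Surjective (LinearMap.pi fun i => (fderiv ℝ (f i) x : EuclideanSpace ℝ (Fin r) →ₗ[ℝ] ℝ)) := by
    apply aux_pi_surjective
    have : LinearIndependent ℝ (fun i => ((fderiv ℝ (f i) x : EuclideanSpace ℝ (Fin r) →L[ℝ] ℝ) : EuclideanSpace ℝ (Fin r) →ₗ[ℝ] ℝ)) := by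
      apply hind.map' (ContinuousLinearMap.coeLM ℝ)
      rw [LinearMap.ker_eq_bot]
      intro a b hab
      exact ContinuousLinearMap.coe_injective hab
    exact this
  have hkerK : (LinearMap.ker (LinearMap.pi fun i => (fderiv ℝ (f i) x : EuclideanSpace ℝ (Fin r) →ₗ[ℝ] ℝ))) = K := by
    rw [hKdef]
    ext v
    simp only [LinearMap.mem_ker, hDΦdef, ContinuousLinearMap.coe_pi]
  have hfinrank : Module.finrank ℝ ((Fin k → ℝ) × K) = Module.finrank ℝ (EuclideanSpace ℝ (Fin r)) := by
    have hrn := LinearMap.finrank_range_add_finrank_ker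
      (LinearMap.pi fun i => (fderiv ℝ (f i) x : EuclideanSpace ℝ (Fin r) →ₗ[ℝ] ℝ))
    rw [LinearMap.range_eq_top.2 hsurj, hkerK, finrank_top] at hrn
    rw [Module.finrank_prod, ← hrn]
  -- the continuous linear equivalence
  let e₀ : EuclideanSpace ℝ (Fin r) ≃ₗ[ℝ] ((Fin k → ℝ) × K) :=
    LinearMap.linearEquivOfInjective (DG x).toLinearMap hinj hfinrank.symm
  let e : EuclideanSpace ℝ (Fin r) ≃L[ℝ] ((Fin k → ℝ) × K) := e₀.toContinuousLinearEquiv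
  have he : (e : EuclideanSpace ℝ (Fin r) →L[ℝ] ((Fin k → ℝ) × K)) = DG x := by
    apply ContinuousLinearMap.ext
    intro v
    show e₀ v = DG x v
    exact LinearMap.linearEquivOfInjective_apply _ hfinrank.symm v
  have hGx' : HasFDerivAt G (e : EuclideanSpace ℝ (Fin r) →L[ℝ] ((Fin k → ℝ) × K)) x := by
    rw [he]; exact hGat x hx
  -- smoothness of G at x
  have hGc : ContDiffAt ℝ 1 G x := by
    rw [hGdef]
    apply ContDiffAt.prodMk
    · rw [hΦdef]
      exact contDiffAt_pi.2 fun i => (hf i).contDiffAt (hX.mem_nhds hx)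
    · exact P.contDiff.contDiffAt
  -- local inverse
  have hst : HasStrictFDerivAt G (e : EuclideanSpace ℝ (Fin r) →L[ℝ] ((Fin k → ℝ) × K)) x :=
    hGc.hasStrictFDerivAt' hGx' one_ne_zero
  set ψ : ((Fin k → ℝ) × K) → EuclideanSpace ℝ (Fin r) := hst.localInverse G e x with hψdef
  have hleft : ∀ᶠ y in nhds x, ψ (G y) = y := hst.eventually_left_inverse
  have hright : ∀ᶠ w in nhds (G x), G (ψ w) = w := hst.eventually_right_inverse
  have hψx : ψ (G x) = x := hst.localInverse_apply_image
  have hψc : ContDiffAt ℝ 1 ψ (G x) := hGc.to_localInverse hGx' one_ne_zero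
  obtain ⟨W₁, hW₁nhds, hW₁⟩ := hψc.contDiffOn le_rfl (by simp)
  obtain ⟨T, hTmem, hT⟩ := Filter.eventually_iff_exists_mem.1 hspan
  set X' : Set (EuclideanSpace ℝ (Fin r)) := X ∩ interior T with hX'def
  have hX'open : IsOpen X' := hX.inter isOpen_interior
  have hxX' : x ∈ X' := ⟨hx, mem_interior_iff_mem_nhds.2 hTmem⟩
  have hX'X : X' ⊆ X := inter_subset_left
  have hpre : ψ ⁻¹' X' ∈ nhds (G x) :=
    hψc.continuousAt.preimage_mem_nhds (by rw [hψx]; exact hX'open.mem_nhds hxX')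
  obtain ⟨δ, hδpos, hδ⟩ := Metric.mem_nhds_iff.1
    (Filter.inter_mem (Filter.inter_mem (mem_interior_iff_mem_nhds.2 hW₁nhds |>
      (fun h => interior_mem_nhds.2 hW₁nhds)) hright) hpre)
  set W : Set ((Fin k → ℝ) × K) := Metric.ball (G x) δ with hWdef
  have hδ1 : W ⊆ interior W₁ := fun w hw => (hδ hw).1.1
  have hδ2 : ∀ w ∈ W, G (ψ w) = w := fun w hw => (hδ hw).1.2
  have hδ3 : ∀ w ∈ W, ψ w ∈ X' := fun w hw => (hδ hw).2
  have hGcont : ContinuousOn G X' := by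
    rw [hGdef]
    apply ContinuousOn.prodMk
    · rw [hΦdef]
      exact continuousOn_pi.2 fun i => ((hf i).continuousOn.mono hX'X)
    · exact P.continuous.continuousOn
  set V : Set (EuclideanSpace ℝ (Fin r)) :=
    interior {y | ψ (G y) = y} ∩ (X' ∩ G ⁻¹' W) with hVdef
  have hVopen : IsOpen V :=
    isOpen_interior.inter (hGcont.isOpen_inter_preimage hX'open isOpen_ball)
  have hxV : x ∈ V :=
    ⟨mem_interior_iff_mem_nhds.2 hleft, hxX', Metric.mem_ball_self hδpos⟩
  refine ⟨V, hVopen, hxV, fun y hy => hX'X hy.2.1, ?_⟩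
  intro x₁ hx₁ x₂ hx₂ hfeq g hg
  have hgdiffat : ∀ y ∈ X, HasFDerivAt g (fderiv ℝ g y) y := fun y hy =>
    (((hF g hg).contDiffAt (hX.mem_nhds hy)).differentiableAt one_ne_zero).hasFDerivAt
  have hΦeq : Φ x₂ = Φ x₁ := by
    rw [hΦdef]; exact funext fun i => (hfeq i).symm
  set s : Set K := {z : K | ((Φ x₁, z) : (Fin k → ℝ) × K) ∈ W} with hsdef
  have hsopen : IsOpen s := isOpen_ball.preimage (continuous_const.prodMk continuous_id)
  have hsconv : Convex ℝ s := by
    intro z₁ hz₁ z₂ hz₂ a b ha hb hab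
    have key : ((Φ x₁, a • z₁ + b • z₂) : (Fin k → ℝ) × K)
        = a • ((Φ x₁, z₁) : (Fin k → ℝ) × K) + b • ((Φ x₁, z₂) : (Fin k → ℝ) × K) := by
      rw [Prod.smul_mk, Prod.smul_mk, Prod.mk_add_mk]
      congr 1
      rw [← add_smul, hab, one_smul]
    show ((Φ x₁, a • z₁ + b • z₂) : (Fin k → ℝ) × K) ∈ W
    rw [key]
    exact (convex_ball (G x) δ) hz₁ hz₂ ha hb hab
  have hkey : ∀ z ∈ s, HasFDerivAt (fun z' : K => g (ψ (Φ x₁, z'))) (0 : K →L[ℝ] ℝ) z := by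
    intro z hz
    set w : (Fin k → ℝ) × K := (Φ x₁, z) with hwdef
    have hwW : w ∈ W := hz
    have hψdw : DifferentiableAt ℝ ψ w :=
      (hW₁.contDiffAt (mem_nhds_iff.2 ⟨interior W₁, interior_subset, isOpen_interior, hδ1 hwW⟩)).differentiableAt one_ne_zero
    set y : EuclideanSpace ℝ (Fin r) := ψ w with hydef
    have hyX' : y ∈ X' := hδ3 w hwW
    have hyX : y ∈ X := hX'X hyX'
    have hcomp : HasFDerivAt (G ∘ ψ) ((DG y).comp (fderiv ℝ ψ w)) w :=
      (hGat y hyX).comp w hψdw.hasFDerivAt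
    have hev : (G ∘ ψ) =ᶠ[nhds w] id :=
      Filter.eventuallyEq_of_mem (isOpen_ball.mem_nhds hwW) (fun w' hw' => hδ2 w' hw')
    have hid : HasFDerivAt (G ∘ ψ) (ContinuousLinearMap.id ℝ ((Fin k → ℝ) × K)) w :=
      (hasFDerivAt_id w).congr_of_eventuallyEq hev
    have huniq : (DG y).comp (fderiv ℝ ψ w) = ContinuousLinearMap.id ℝ ((Fin k → ℝ) × K) :=
      hcomp.unique hid
    have hDΦ0 : ∀ v : K, ∀ i, fderiv ℝ (f i) y (fderiv ℝ ψ w ((0 : Fin k → ℝ), v)) = 0 := by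
      intro v i
      have h1 := congrArg (fun T : ((Fin k → ℝ) × K) →L[ℝ] ((Fin k → ℝ) × K) =>
        (T ((0 : Fin k → ℝ), v)).1 i) huniq
      simpa [hDGdef, hDΦdef] using h1
    have hspany : fderiv ℝ g y ∈ Submodule.span ℝ (Set.range fun i => fderiv ℝ (f i) y) :=
      hT y (interior_subset hyX'.2) g hg
    obtain ⟨co, hco⟩ := (Finsupp.mem_span_range_iff_exists_finsupp).1 hspany
    have hg0 : ∀ v : K, fderiv ℝ g y (fderiv ℝ ψ w ((0 : Fin k → ℝ), v)) = 0 := by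
      intro v
      rw [← hco]
      rw [Finsupp.sum]
      simp only [ContinuousLinearMap.coe_sum', Finset.sum_apply, ContinuousLinearMap.coe_smul',
        Pi.smul_apply, smul_eq_mul]
      exact Finset.sum_eq_zero fun i _ => by rw [hDΦ0 _ i, mul_zero]
    have hmk : HasFDerivAt (fun z' : K => ((Φ x₁, z') : (Fin k → ℝ) × K))
        ((0 : K →L[ℝ] (Fin k → ℝ)).prod (ContinuousLinearMap.id ℝ K)) z :=
      (hasFDerivAt_const (Φ x₁) z).prodMk (hasFDerivAt_id z)
    have hfinal := ((hgdiffat y hyX).comp w hψdw.hasFDerivAt).comp z hmk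
    have hzero : ((fderiv ℝ g y).comp (fderiv ℝ ψ w)).comp
        ((0 : K →L[ℝ] (Fin k → ℝ)).prod (ContinuousLinearMap.id ℝ K))
        = (0 : K →L[ℝ] ℝ) := by
      apply ContinuousLinearMap.ext
      intro v
      simpa using hg0 v
    rw [hzero] at hfinal
    exact hfinal
  have hx₁fix : ψ (G x₁) = x₁ := by
    have h := interior_subset hx₁.1
    exact h
  have hx₂fix : ψ (G x₂) = x₂ := by
    have h := interior_subset hx₂.1
    exact h
  have hz₁ : (P x₁ : K) ∈ s := by
    show ((Φ x₁, P x₁) : (Fin k → ℝ) × K) ∈ W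
    exact hx₁.2.2
  have hz₂ : (P x₂ : K) ∈ s := by
    show ((Φ x₁, P x₂) : (Fin k → ℝ) × K) ∈ W
    rw [← hΦeq]
    exact hx₂.2.2
  have hmvt := hsconv.norm_image_sub_le_of_norm_fderiv_le
    (𝕜 := ℝ) (f := fun z' : K => g (ψ (Φ x₁, z'))) (C := 0)
    (fun z hz => (hkey z hz).differentiableAt)
    (fun z hz => by rw [(hkey z hz).fderiv]; exact (ContinuousLinearMap.opNorm_zero).le) hz₁ hz₂
  rw [zero_mul] at hmvt
  have heq : g (ψ (Φ x₁, P x₂)) = g (ψ (Φ x₁, P x₁)) := by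
    have := norm_sub_eq_zero_iff.1 (le_antisymm hmvt (norm_nonneg _))
    exact this
  have e₁ : ((Φ x₁, P x₁) : (Fin k → ℝ) × K) = G x₁ := rfl
  have e₂ : ((Φ x₁, P x₂) : (Fin k → ℝ) × K) = G x₂ := by
    rw [hGdef]; simp only [← hΦeq]
  rw [e₁, e₂, hx₁fix, hx₂fix] at heq
  exact heq.symm
set_option maxHeartbeats 2000000 in
/-- Local identification with `r` experiments: for a response `β : X × U → ℝ` which is
continuously differentiable in the parameter, there is an open dense subset `X₀` of `X` such
that around every point of `X₀` there are a neighborhood `V` and `r` pairwise distinct inputs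
in `U` forming a universal distinguishing set for the parameters in `V`. -/
theorem local_identification_with_r_experiments
    (r m : ℕ) (hm : 0 < m)
    (X : Set (EuclideanSpace ℝ (Fin r))) (U : Set (EuclideanSpace ℝ (Fin m)))
    (hXopen : IsOpen X) (hXne : X.Nonempty)
    (hUopen : IsOpen U) (hUne : U.Nonempty)
    (β : EuclideanSpace ℝ (Fin r) × EuclideanSpace ℝ (Fin m) → ℝ)
    (hβ : ∀ u ∈ U, ContDiffOn ℝ 1 (fun x => β (x, u)) X) :
    ∃ X₀ : Set (EuclideanSpace ℝ (Fin r)), X₀ ⊆ X ∧ IsOpen X₀ ∧ X ⊆ closure X₀ ∧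
      ∀ x ∈ X₀, ∃ V : Set (EuclideanSpace ℝ (Fin r)), IsOpen V ∧ x ∈ V ∧ V ⊆ X ∧
        ∃ w : Fin r → EuclideanSpace ℝ (Fin m),
          (∀ i, w i ∈ U) ∧ (∀ i j, i ≠ j → w i ≠ w j) ∧
          ∀ x₁ ∈ V, ∀ x₂ ∈ V,
            (∀ i, β (x₁, w i) = β (x₂, w i)) → ∀ u ∈ U, β (x₁, u) = β (x₂, u) := by
  classical
  set Df : EuclideanSpace ℝ (Fin m) → EuclideanSpace ℝ (Fin r) →
      (EuclideanSpace ℝ (Fin r) →L[ℝ] ℝ) :=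
    fun u y => fderiv ℝ (fun x' => β (x', u)) y with hDfdef
  set S : EuclideanSpace ℝ (Fin r) → Set (EuclideanSpace ℝ (Fin r) →L[ℝ] ℝ) :=
    fun y => {T | ∃ u ∈ U, Df u y = T} with hSdef
  set ρ : EuclideanSpace ℝ (Fin r) → ℕ :=
    fun y => Module.finrank ℝ (Submodule.span ℝ (S y)) with hρdef
  have hρle : ∀ y, ρ y ≤ r := by
    intro y
    have h1 : ρ y ≤ Module.finrank ℝ (EuclideanSpace ℝ (Fin r) →L[ℝ] ℝ) :=
      Submodule.finrank_le _
    have h2 : Module.finrank ℝ (EuclideanSpace ℝ (Fin r) →L[ℝ] ℝ) = r := by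
      rw [← (LinearMap.toContinuousLinearMap :
        (EuclideanSpace ℝ (Fin r) →ₗ[ℝ] ℝ) ≃ₗ[ℝ] _).finrank_eq]
      rw [Module.finrank_linearMap, Module.finrank_self, mul_one, finrank_euclideanSpace_fin]
    rw [h2] at h1
    exact h1
  -- membership in S
  have hmemS : ∀ u ∈ U, ∀ y, Df u y ∈ S y := fun u hu y => ⟨u, hu, rfl⟩
  -- independent families bound the rank
  have hcard_le : ∀ (n : ℕ) (v : Fin n → (EuclideanSpace ℝ (Fin r) →L[ℝ] ℝ))
      (y : EuclideanSpace ℝ (Fin r)), (∀ i, v i ∈ S y) → LinearIndependent ℝ v → n ≤ ρ y := by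
    intro n v y hmem hind
    have h1 : ∀ i, v i ∈ Submodule.span ℝ (S y) := fun i => Submodule.subset_span (hmem i)
    have hind' : LinearIndependent ℝ (fun i => (⟨v i, h1 i⟩ : Submodule.span ℝ (S y))) := by
      apply LinearIndependent.of_comp (Submodule.span ℝ (S y)).subtype
      exact hind
    simpa using hind'.fintype_card_le_finrank
  -- witness of the rank
  have hwitness : ∀ y ∈ X, ∃ u : Fin (ρ y) → EuclideanSpace ℝ (Fin m),
      (∀ i, u i ∈ U) ∧ LinearIndependent ℝ (fun i => Df (u i) y) := by
    intro y hy
    obtain ⟨t, hts, hspan, hind⟩ := exists_linearIndependent ℝ (S y)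
    have htfin : t.Finite := Set.finite_coe_iff.1 hind.finite
    haveI := htfin.fintype
    have hcard : Fintype.card t = ρ y := by
      show Fintype.card t = Module.finrank ℝ (Submodule.span ℝ (S y))
      rw [← hspan, finrank_span_set_eq_card hind, Set.toFinset_card]
    let eq : t ≃ Fin (ρ y) := Fintype.equivFinOfCardEq hcard
    have hb : ∀ i : Fin (ρ y), ((eq.symm i : t) : EuclideanSpace ℝ (Fin r) →L[ℝ] ℝ) ∈ S y :=
      fun i => hts (eq.symm i).2
    choose u huU hDfu using fun i => hb i
    refine ⟨u, huU, ?_⟩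
    have heq : (fun i => Df (u i) y) =
        (fun i : Fin (ρ y) => ((eq.symm i : t) : EuclideanSpace ℝ (Fin r) →L[ℝ] ℝ)) :=
      funext fun i => hDfu i
    rw [heq]
    exact hind.comp eq.symm eq.symm.injective
  -- lower semicontinuity of ρ
  have hlsc : ∀ y₀ ∈ X, ∃ O, IsOpen O ∧ y₀ ∈ O ∧ O ⊆ X ∧ (∀ y ∈ O, ρ y₀ ≤ ρ y) ∧
      ∃ u : Fin (ρ y₀) → EuclideanSpace ℝ (Fin m), (∀ i, u i ∈ U) ∧
        ∀ y ∈ O, LinearIndependent ℝ (fun i => Df (u i) y) := by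
    intro y₀ hy₀
    obtain ⟨u, huU, huind⟩ := hwitness y₀ hy₀
    have hcont : ContinuousOn (fun y => (fun i => Df (u i) y)) X :=
      continuousOn_pi.2 fun i =>
        (hβ (u i) (huU i)).continuousOn_fderiv_of_isOpen hXopen le_rfl
    have hO' : IsOpen {p : Fin (ρ y₀) → (EuclideanSpace ℝ (Fin r) →L[ℝ] ℝ) |
        LinearIndependent ℝ p} := isOpen_setOf_linearIndependent
    refine ⟨X ∩ (fun y => (fun i => Df (u i) y)) ⁻¹' {p | LinearIndependent ℝ p},
      hcont.isOpen_inter_preimage hXopen hO', ⟨hy₀, huind⟩, Set.inter_subset_left, ?_, u, huU,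
      fun y hy => hy.2⟩
    intro y hy
    exact hcard_le _ _ y (fun i => hmemS (u i) (huU i) y) hy.2
  -- the open dense set
  set X₀ : Set (EuclideanSpace ℝ (Fin r)) :=
    {x | ∃ ε > 0, Metric.ball x ε ⊆ X ∧ ∀ y ∈ Metric.ball x ε, ρ y = ρ x} with hX₀def
  have hX₀sub : X₀ ⊆ X := by
    rintro x ⟨ε, hε, hball, -⟩
    exact hball (Metric.mem_ball_self hε)
  have hX₀open : IsOpen X₀ := by
    rw [Metric.isOpen_iff]
    rintro x ⟨ε, hε, hball, hconst⟩
    refine ⟨ε, hε, ?_⟩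
    intro y hy
    refine ⟨ε - dist y x, by simpa using hy, ?_, ?_⟩
    · intro z hz
      apply hball
      calc dist z x ≤ dist z y + dist y x := dist_triangle _ _ _
        _ < (ε - dist y x) + dist y x := by
            exact add_lt_add_of_lt_of_le (Metric.mem_ball.1 hz) le_rfl
        _ = ε := by ring
    · intro z hz
      have hzball : z ∈ Metric.ball x ε := by
        apply Metric.mem_ball.2
        calc dist z x ≤ dist z y + dist y x := dist_triangle _ _ _
          _ < (ε - dist y x) + dist y x := add_lt_add_of_lt_of_le (Metric.mem_ball.1 hz) le_rfl
          _ = ε := by ring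
      rw [hconst z hzball, hconst y hy]
  have hX₀dense : X ⊆ closure X₀ := by
    intro x hx
    rw [Metric.mem_closure_iff]
    intro ε hε
    obtain ⟨ε₁, hε₁pos, hball₁⟩ := Metric.isOpen_iff.1 hXopen x hx
    set ε₂ : ℝ := min (ε₁ / 2) (ε / 2) with hε₂def
    have hε₂pos : 0 < ε₂ := lt_min (by linarith) (by linarith)
    set B : Set (EuclideanSpace ℝ (Fin r)) := Metric.ball x ε₂ with hBdef
    have hBX : B ⊆ X := fun z hz => hball₁ <| Metric.mem_ball.2 <|
      lt_of_lt_of_le (lt_of_lt_of_le (Metric.mem_ball.1 hz) (min_le_left _ _)) (by linarith)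
    have hBne : (ρ '' B).Nonempty := ⟨ρ x, x, Metric.mem_ball_self hε₂pos, rfl⟩
    have hBbdd : BddAbove (ρ '' B) := ⟨r, by rintro n ⟨y, -, rfl⟩; exact hρle y⟩
    obtain ⟨y₀, hy₀B, hy₀max⟩ : ∃ y₀ ∈ B, ρ y₀ = sSup (ρ '' B) := by
      have := Nat.sSup_mem hBne hBbdd
      obtain ⟨y₀, hy₀, h⟩ := this
      exact ⟨y₀, hy₀, h⟩
    obtain ⟨O, hOopen, hy₀O, hOX, hOge, -⟩ := hlsc y₀ (hBX hy₀B)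
    obtain ⟨ε₃, hε₃pos, hball₃⟩ := Metric.isOpen_iff.1 (hOopen.inter Metric.isOpen_ball) y₀
      ⟨hy₀O, hy₀B⟩
    refine ⟨y₀, ⟨ε₃, hε₃pos, fun z hz => hOX (hball₃ hz).1, ?_⟩, ?_⟩
    · intro y hy
      have h1 : ρ y₀ ≤ ρ y := hOge y (hball₃ hy).1
      have h2 : ρ y ≤ ρ y₀ := by
        rw [hy₀max]
        exact le_csSup hBbdd ⟨y, (hball₃ hy).2, rfl⟩
      omega
    · have : dist y₀ x < ε₂ := Metric.mem_ball.1 hy₀B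
      rw [dist_comm]
      calc dist y₀ x < ε₂ := this
        _ ≤ ε / 2 := min_le_right _ _
        _ < ε := by linarith
  refine ⟨X₀, hX₀sub, hX₀open, hX₀dense, ?_⟩
  -- local property
  intro x hx₀
  obtain ⟨ε, hεpos, hballX, hconst⟩ := hx₀
  have hxX : x ∈ X := hballX (Metric.mem_ball_self hεpos)
  obtain ⟨O, hOopen, hxO, hOX, hOge, u, huU, huind⟩ := hlsc x hxX
  set F : Set (EuclideanSpace ℝ (Fin r) → ℝ) :=
    {g | ∃ u' ∈ U, g = fun y => β (y, u')} with hFdef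
  have hF : ∀ g ∈ F, ContDiffOn ℝ 1 g X := by
    rintro g ⟨u', hu', rfl⟩
    exact hβ u' hu'
  have hspan : ∀ᶠ y in nhds x, ∀ g ∈ F,
      fderiv ℝ g y ∈ Submodule.span ℝ (Set.range fun i => fderiv ℝ (fun y' => β (y', u i)) y) := by
    have hopen : IsOpen (O ∩ Metric.ball x ε) := hOopen.inter Metric.isOpen_ball
    have hmem : x ∈ O ∩ Metric.ball x ε := ⟨hxO, Metric.mem_ball_self hεpos⟩
    filter_upwards [hopen.mem_nhds hmem]
    rintro y ⟨hyO, hyball⟩ g ⟨u', hu', rfl⟩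
    by_contra hnot
    have hρy : ρ y = (ρ x) := hconst y hyball
    have hindy := huind y hyO
    have hoption : LinearIndependent ℝ
        (fun o : Option (Fin (ρ x)) => Option.casesOn' o (Df u' y) (fun i => Df (u i) y)) :=
      LinearIndependent.option hindy hnot
    have hle := hcard_le ((ρ x) + 1)
      ((fun o : Option (Fin (ρ x)) => Option.casesOn' o (Df u' y) (fun i => Df (u i) y)) ∘
        (finSuccEquiv (ρ x))) y ?_ ?_
    · omega
    · intro i
      rcases h : (finSuccEquiv (ρ x)) i with _ | j
      · simp only [Function.comp_apply, h, Option.casesOn'_none]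
        exact hmemS u' hu' y
      · simp only [Function.comp_apply, h, Option.casesOn'_some]
        exact hmemS (u j) (huU j) y
    · exact hoption.comp _ (finSuccEquiv (ρ x)).injective
  obtain ⟨V, hVopen, hxV, hVX, hVprop⟩ := aux_core hXopen hxX
    (fun i y => β (y, u i)) (fun i => hβ (u i) (huU i)) (huind x hxO) F hF hspan
  -- build the tuple of r distinct inputs
  have hUinf : U.Infinite := by
    haveI : Nonempty (Fin m) := ⟨⟨0, hm⟩⟩
    obtain ⟨u₀, hu₀⟩ := hUne
    exact infinite_of_mem_nhds u₀ (hUopen.mem_nhds hu₀)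
  have hkr : (ρ x) ≤ r := hρle x
  have huinj : Function.Injective u := by
    intro i j hij
    have := (huind x hxO).injective (by rw [hij] : Df (u i) x = Df (u j) x)
    exact this
  have hdiffinf : (U \ Set.range u).Infinite := hUinf.diff (Set.finite_range u)
  haveI : Infinite ↥(U \ Set.range u) := Set.infinite_coe_iff.2 hdiffinf
  set emb : ℕ ↪ ↥(U \ Set.range u) := Infinite.natEmbedding _ with hembdef
  set w : Fin r → EuclideanSpace ℝ (Fin m) :=
    fun i => if h : (i : ℕ) < (ρ x) then u ⟨i, h⟩ else (emb i : EuclideanSpace ℝ (Fin m)) with hwdef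
  have hwU : ∀ i, w i ∈ U := by
    intro i
    rw [hwdef]
    by_cases h : (i : ℕ) < (ρ x)
    · simp only [h, dif_pos]
      exact huU _
    · simp only [h, dif_neg, not_false_iff]
      exact (emb i).2.1
  have hwinj : ∀ i j, i ≠ j → w i ≠ w j := by
    intro i j hij heq
    rw [hwdef] at heq
    simp only at heq
    by_cases hi : (i : ℕ) < (ρ x) <;> by_cases hj : (j : ℕ) < (ρ x)
    · rw [dif_pos hi, dif_pos hj] at heq
      apply hij
      have h1 : (i : ℕ) = (j : ℕ) := by simpa using huinj heq
      exact Fin.ext h1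
    · rw [dif_pos hi, dif_neg hj] at heq
      exact (emb j).2.2 ⟨_, heq⟩
    · rw [dif_neg hi, dif_pos hj] at heq
      exact (emb i).2.2 ⟨_, heq.symm⟩
    · rw [dif_neg hi, dif_neg hj] at heq
      apply hij
      have := emb.injective (Subtype.coe_injective heq)
      exact Fin.ext (by exact_mod_cast congrArg id this)
  refine ⟨V, hVopen, hxV, hVX, w, hwU, hwinj, ?_⟩
  intro x₁ hx₁ x₂ hx₂ hagree u' hu'
  have hfeq : ∀ i : Fin (ρ x), β (x₁, u i) = β (x₂, u i) := by
    intro i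
    have hi : (i : ℕ) < r := lt_of_lt_of_le i.2 hkr
    have h2 := hagree ⟨i, hi⟩
    rw [hwdef] at h2
    simp only [dif_pos i.2] at h2
    simpa using h2
  exact hVprop x₁ hx₁ x₂ hx₂ hfeq (fun y => β (y, u')) ⟨u', hu', rfl⟩
end

section
/- Let γ : ℝ → ℝ be an infinitely differentiable function with γ(t) ≠ 0 for all t < 0 and γ(t) = 0 for all t ≥ 0, and define β : (0,∞) × (0,∞) → ℝ by β(x,u) = γ(x − u). Then: (i) for all x ≠ y in (0,∞) there exists u ∈ (0,∞) with β(x,u) ≠ β(y,u) (every two distinct parameters are distinguishable); and (ii) for every finite subset U₀ ⊆ (0,∞) there exist x ≠ y in (0,∞) with β(x,u) = β(y,u) for all u ∈ U₀ (there is no finite universal distinguishing set). -/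
/-- Smooth counterexample: for a `C^∞` function `γ` vanishing exactly on `[0,∞)`, the smooth
response `β(x,u) = γ(x − u)` on `(0,∞) × (0,∞)` has every pair of distinct parameters
distinguishable, yet admits no finite universal distinguishing set. -/
theorem smooth_response_no_finite_universal_distinguishing_set
    (γ : ℝ → ℝ) (hγ : ContDiff ℝ (⊤ : ℕ∞) γ)
    (hneg : ∀ t : ℝ, t < 0 → γ t ≠ 0) (hpos : ∀ t : ℝ, 0 ≤ t → γ t = 0) :
    (∀ x y : ℝ, 0 < x → 0 < y → x ≠ y →
        ∃ u : ℝ, 0 < u ∧ γ (x - u) ≠ γ (y - u)) ∧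
    (∀ U₀ : Finset ℝ, (↑U₀ : Set ℝ) ⊆ Set.Ioi (0 : ℝ) →
        ∃ x y : ℝ, 0 < x ∧ 0 < y ∧ x ≠ y ∧ ∀ u ∈ U₀, γ (x - u) = γ (y - u)) := by
  constructor
  · intro x y hx hy hxy
    rcases lt_or_gt_of_ne hxy with h | h
    · refine ⟨y, hy, ?_⟩
      have h1 : γ (x - y) ≠ 0 := hneg _ (by linarith)
      rw [sub_self, hpos 0 le_rfl]
      exact h1
    · refine ⟨x, hx, ?_⟩
      have h1 : γ (y - x) ≠ 0 := hneg _ (by linarith)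
      rw [sub_self, hpos 0 le_rfl]
      exact fun h => h1 h.symm
  · intro U₀ _
    set M : ℝ := (insert (0:ℝ) U₀).max' (by simp) with hM
    have hM0 : (0:ℝ) ≤ M := Finset.le_max' _ _ (by simp)
    have hMle : ∀ u ∈ U₀, u ≤ M := fun u hu =>
      Finset.le_max' _ _ (Finset.mem_insert_of_mem hu)
    refine ⟨M + 1, M + 2, by linarith, by linarith, by norm_num, fun u hu => ?_⟩
    have h := hMle u hu
    rw [hpos _ (by linarith), hpos _ (by linarith)]
end

section
/- Let m ≥ 1 and let S be a nonempty subset of the Euclidean space ℝ^m. Then the following are equivalent: (i) there exists a finite set U₀ ⊆ ℝ^m of cardinality m − 1 such that for all a, b ∈ S, if ⟨a − b, u⟩ = 0 for every u ∈ U₀ then a = b; (ii) there exists a unit vector v ∈ ℝ^m (‖v‖ = 1) that is not a unit secant of S, i.e. v ≠ (a − b)/‖a − b‖ for all a, b ∈ S with a ≠ b. -/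
/-!
A finite set `U` distinguishes the points of `S` exactly when no nonzero difference of two points
of `S` lies in `(span U)ᗮ`, and a unit vector `v` is a unit secant exactly when some nonzero
difference lies on the line `ℝ ∙ v`. If `#U = m - 1`, then `(span U)ᗮ` is nonzero and any unit
vector in it avoids the secants. Conversely, if the unit vector `v` avoids the secants, a spanning
set of `m - 1` vectors of the hyperplane `(ℝ ∙ v)ᗮ` distinguishes `S`, since the orthogonal
complement of that hyperplane is the line `ℝ ∙ v`.
-/

open Module Submodule

section

variable {𝕜 E : Type*} [RCLike 𝕜] [NormedAddCommGroup E] [InnerProductSpace 𝕜 E]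

theorem Submodule.mem_orthogonal_span_iff {s : Set E} {x : E} :
    x ∈ (span 𝕜 s)ᗮ ↔ ∀ u ∈ s, inner 𝕜 x u = 0 := by
  rw [← span_singleton_le_iff_mem, ← isOrtho_iff_le, isOrtho_span]
  simp

theorem Submodule.exists_norm_eq_one_mem_orthogonal {K : Submodule 𝕜 E}
    [K.HasOrthogonalProjection] (hK : K ≠ ⊤) : ∃ v ∈ Kᗮ, ‖v‖ = 1 := by
  obtain ⟨w, hwK, hw0⟩ := exists_mem_ne_zero_of_ne_bot (mt orthogonal_eq_bot_iff.mp hK)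
  exact ⟨(‖w‖⁻¹ : 𝕜) • w, Kᗮ.smul_mem _ hwK, norm_smul_inv_norm hw0⟩

end

variable {E : Type*} [NormedAddCommGroup E] [InnerProductSpace ℝ E]

def IsDistinguishingSet (S U : Set E) : Prop :=
  ∀ a ∈ S, ∀ b ∈ S, (∀ u ∈ U, inner ℝ (a - b) u = 0) → a = b

def unitSecants (S : Set E) : Set E :=
  {v | ∃ a ∈ S, ∃ b ∈ S, a ≠ b ∧ v = ‖a - b‖⁻¹ • (a - b)}

theorem notMem_unitSecants_iff {S : Set E} {v : E} :
    v ∉ unitSecants S ↔ ∀ a ∈ S, ∀ b ∈ S, a ≠ b → v ≠ ‖a - b‖⁻¹ • (a - b) := by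
  simp [unitSecants]

theorem inv_norm_smul_smul_of_norm_eq_one {v : E} (hv : ‖v‖ = 1) {r : ℝ} (hr : 0 < r) :
    ‖r • v‖⁻¹ • r • v = v := by
  rw [norm_smul, hv, mul_one, Real.norm_of_nonneg hr.le, smul_smul, inv_mul_cancel₀ hr.ne',
    one_smul]

theorem mem_unitSecants_iff {S : Set E} {v : E} (hv : ‖v‖ = 1) :
    v ∈ unitSecants S ↔ ∃ a ∈ S, ∃ b ∈ S, a ≠ b ∧ a - b ∈ ℝ ∙ v := by
  constructor
  · rintro ⟨a, ha, b, hb, hab, rfl⟩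
    refine ⟨a, ha, b, hb, hab, mem_span_singleton.mpr ⟨‖a - b‖, ?_⟩⟩
    rw [smul_smul, mul_inv_cancel₀ (norm_ne_zero_iff.mpr (sub_ne_zero.mpr hab)), one_smul]
  · rintro ⟨a, ha, b, hb, hab, hmem⟩
    obtain ⟨r, hr⟩ := mem_span_singleton.mp hmem
    rcases lt_trichotomy r 0 with hneg | rfl | hpos
    · have hba : b - a = (-r) • v := by rw [neg_smul, hr, neg_sub]
      refine ⟨b, hb, a, ha, hab.symm, ?_⟩
      rw [hba, inv_norm_smul_smul_of_norm_eq_one hv (neg_pos.mpr hneg)]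
    · exact absurd (sub_eq_zero.mp (by rw [← hr, zero_smul])) hab
    · exact ⟨a, ha, b, hb, hab, by rw [← hr, inv_norm_smul_smul_of_norm_eq_one hv hpos]⟩

theorem exists_norm_eq_one_notMem_unitSecants {S : Set E} {U : Finset E}
    (hcard : U.card < finrank ℝ E) (hU : IsDistinguishingSet S U) :
    ∃ v : E, ‖v‖ = 1 ∧ v ∉ unitSecants S := by
  have hK : span ℝ (U : Set E) ≠ ⊤ := fun htop ↦ by
    have := finrank_span_finset_le_card (R := ℝ) U
    rw [Set.finrank, htop, finrank_top] at this
    omega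
  obtain ⟨v, hvK, hv⟩ := exists_norm_eq_one_mem_orthogonal hK
  refine ⟨v, hv, fun hvS ↦ ?_⟩
  obtain ⟨a, ha, b, hb, hab, hline⟩ := (mem_unitSecants_iff hv).mp hvS
  have hperp : a - b ∈ (span ℝ (U : Set E))ᗮ :=
    (span_singleton_le_iff_mem _ _).mpr hvK hline
  exact hab (hU a ha b hb (mem_orthogonal_span_iff.mp hperp))

theorem exists_finset_card_isDistinguishingSet [FiniteDimensional ℝ E] {S : Set E} {v : E}
    (hv : ‖v‖ = 1) (hvS : v ∉ unitSecants S) :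
    ∃ U : Finset E, U.card = finrank ℝ E - 1 ∧ IsDistinguishingSet S U := by
  have hfinrank : finrank ℝ (ℝ ∙ v)ᗮ = finrank ℝ E - 1 := by
    have := (ℝ ∙ v).finrank_add_finrank_orthogonal
    rw [finrank_span_singleton (norm_ne_zero_iff.mp (by rw [hv]; exact one_ne_zero))] at this
    omega
  obtain ⟨U, -, hcard, hspan, -⟩ :=
    exists_finset_span_eq_linearIndepOn ℝ ((ℝ ∙ v)ᗮ : Set E)
  rw [span_eq] at hcard hspan
  refine ⟨U, hcard.trans hfinrank, fun a ha b hb horth ↦ ?_⟩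
  have hline : a - b ∈ ℝ ∙ v := by
    rw [← orthogonal_orthogonal (ℝ ∙ v), ← hspan]
    exact mem_orthogonal_span_iff.mpr horth
  by_contra hab
  exact hvS ((mem_unitSecants_iff hv).mpr ⟨a, ha, b, hb, hab, hline⟩)

theorem distinguishing_set_card_pred_iff_secants_not_whole_sphere_general
    (m : ℕ) (hm : 1 ≤ m) (S : Set (EuclideanSpace ℝ (Fin m))) :
    (∃ U₀ : Finset (EuclideanSpace ℝ (Fin m)), U₀.card = m - 1 ∧
        ∀ a ∈ S, ∀ b ∈ S, (∀ u ∈ U₀, @inner ℝ _ _ (a - b) u = (0 : ℝ)) → a = b) ↔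
    (∃ v : EuclideanSpace ℝ (Fin m), ‖v‖ = 1 ∧
        ∀ a ∈ S, ∀ b ∈ S, a ≠ b → v ≠ ‖a - b‖⁻¹ • (a - b)) := by
  have hdim : finrank ℝ (EuclideanSpace ℝ (Fin m)) = m := finrank_euclideanSpace_fin
  constructor
  · rintro ⟨U, hcard, hU⟩
    obtain ⟨v, hv, hvS⟩ := exists_norm_eq_one_notMem_unitSecants (U := U) (by omega) hU
    exact ⟨v, hv, notMem_unitSecants_iff.mp hvS⟩
  · rintro ⟨v, hv, hvS⟩
    obtain ⟨U, hcard, hU⟩ :=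
      exists_finset_card_isDistinguishingSet hv (notMem_unitSecants_iff.mpr hvS)
    exact ⟨U, hcard.trans (by rw [hdim]), hU⟩

/-- For a nonempty set `S ⊆ ℝ^m`, there is a universal distinguishing set of `m − 1` vectors
(i.e. a finite set `U₀` of cardinality `m − 1` such that any two points of `S` whose difference
is orthogonal to all of `U₀` coincide) if and only if some unit vector of `ℝ^m` is not a unit
secant of `S`. -/
theorem distinguishing_set_card_pred_iff_secants_not_whole_sphere
    (m : ℕ) (hm : 1 ≤ m) (S : Set (EuclideanSpace ℝ (Fin m))) (hS : S.Nonempty) :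
    (∃ U₀ : Finset (EuclideanSpace ℝ (Fin m)), U₀.card = m - 1 ∧
        ∀ a ∈ S, ∀ b ∈ S, (∀ u ∈ U₀, @inner ℝ _ _ (a - b) u = (0 : ℝ)) → a = b) ↔
    (∃ v : EuclideanSpace ℝ (Fin m), ‖v‖ = 1 ∧
        ∀ a ∈ S, ∀ b ∈ S, a ≠ b → v ≠ ‖a - b‖⁻¹ • (a - b)) :=
  distinguishing_set_card_pred_iff_secants_not_whole_sphere_general m hm S
end

section
/- Pick any real a > 0 and any nonnegative integer k, and let f(x) = (x + a)·sin x for x ∈ ℝ. Then there exist a real number M_k with (2k + 1/2)π < M_k < (2k + 1)π and a continuous map α : [2kπ, M_k] → [M_k, (2k+1)π] such that α(2kπ) = (2k+1)π, α(M_k) = M_k, and f(α(x)) = f(x) for all x ∈ [2kπ, M_k]. -/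
open Real Set Function

/-!
On `[0, π]` the derivative `sin x + (x + a) cos x` of `(x + a) sin x` is positive up to `π / 2`
and strictly decreasing after it (its own derivative `2 cos x - (x + a) sin x` is negative there),
so it has a single zero `M`: the function rises on `[0, M]`, falls on `[M, π]` and vanishes at
both ends. The branch `α` is the inverse of the falling part composed with the rising part; that
inverse is continuous because a continuous injection of a compact set is a homeomorphism onto its
image. By `2π`-periodicity of `sin`, the function on `[2kπ, (2k+1)π]` is the case `a + 2kπ` of
this, translated by `2kπ`.
-/

theorem ContinuousOn.invFunOn_image {X Y : Type*} [TopologicalSpace X] [TopologicalSpace Y]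
    [T2Space Y] [Nonempty X] {f : X → Y} {s : Set X} (hs : IsCompact s)
    (hf : ContinuousOn f s) (hinj : InjOn f s) : ContinuousOn (invFunOn f s) (f '' s) := by
  have : CompactSpace s := isCompact_iff_compactSpace.mp hs
  let e : s ≃ f '' s := Equiv.Set.imageOfInjOn f s hinj
  have he : Continuous e := (continuousOn_iff_continuous_domRestrict.mp hf).subtype_mk _
  rw [continuousOn_iff_continuous_domRestrict]
  convert continuous_subtype_val.comp he.homeoOfEquivCompactToT2.symm.continuous using 1
  funext y
  refine hinj (invFunOn_mem y.2) (Subtype.coe_prop _) ?_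
  rw [invFunOn_eq y.2]
  exact congrArg Subtype.val (e.apply_symm_apply y).symm

theorem exists_matching_branch_of_strictMonoOn_of_strictAntiOn {f : ℝ → ℝ} {p M q : ℝ}
    (hpM : p ≤ M) (hMq : M ≤ q) (hf : ContinuousOn f (Icc p q))
    (hmono : StrictMonoOn f (Icc p M)) (hanti : StrictAntiOn f (Icc M q)) (hpq : f p = f q) :
    ∃ α : ℝ → ℝ, ContinuousOn α (Icc p M) ∧ MapsTo α (Icc p M) (Icc M q) ∧
      α p = q ∧ α M = M ∧ ∀ x ∈ Icc p M, f (α x) = f x := by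
  have hM : M ∈ Icc M q := left_mem_Icc.mpr hMq
  have hq : q ∈ Icc M q := right_mem_Icc.mpr hMq
  have hmaps : MapsTo f (Icc p M) (f '' Icc M q) := fun x hx ↦
    intermediate_value_Icc' hMq (hf.mono (Icc_subset_Icc_left hpM))
      ⟨hpq ▸ hmono.monotoneOn (left_mem_Icc.mpr (hx.1.trans hx.2)) hx hx.1,
        hmono.monotoneOn hx (right_mem_Icc.mpr (hx.1.trans hx.2)) hx.2⟩
  have hleft := hanti.injOn.leftInvOn_invFunOn
  refine ⟨invFunOn f (Icc M q) ∘ f, ?_, fun x hx ↦ invFunOn_mem (hmaps hx), ?_, hleft hM,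
    fun x hx ↦ invFunOn_eq (hmaps hx)⟩
  · exact (ContinuousOn.invFunOn_image isCompact_Icc (hf.mono (Icc_subset_Icc_left hpM))
      hanti.injOn).comp (hf.mono (Icc_subset_Icc_right hMq)) hmaps
  · simp only [comp_apply, hpq, hleft hq]

theorem hasDerivAt_add_mul_sin (a x : ℝ) :
    HasDerivAt (fun t ↦ (t + a) * sin t) (sin x + (x + a) * cos x) x := by
  simpa using ((hasDerivAt_id' x).add_const a).fun_mul (hasDerivAt_sin x)

theorem hasDerivAt_sin_add_add_mul_cos (a x : ℝ) :
    HasDerivAt (fun t ↦ sin t + (t + a) * cos t) (2 * cos x - (x + a) * sin x) x := by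
  refine ((hasDerivAt_sin x).fun_add (((hasDerivAt_id' x).add_const a).fun_mul
    (hasDerivAt_cos x))).congr_deriv ?_
  ring

theorem strictAntiOn_sin_add_add_mul_cos {a : ℝ} (ha : 0 ≤ a) :
    StrictAntiOn (fun t ↦ sin t + (t + a) * cos t) (Icc (π / 2) π) := by
  refine strictAntiOn_of_deriv_neg (convex_Icc _ _) (by fun_prop) fun x hx ↦ ?_
  rw [interior_Icc] at hx
  obtain ⟨hx₁, hx₂⟩ := hx
  rw [(hasDerivAt_sin_add_add_mul_cos a x).deriv]
  have hcos : cos x < 0 := cos_neg_of_pi_div_two_lt_of_lt hx₁ (by linarith)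
  have hsin : 0 < sin x := sin_pos_of_pos_of_lt_pi (by linarith [pi_pos]) hx₂
  nlinarith [mul_pos (show 0 < x + a by linarith [pi_pos]) hsin]

theorem exists_strictMonoOn_strictAntiOn_add_mul_sin {a : ℝ} (ha : 0 ≤ a) :
    ∃ M ∈ Ioo (π / 2) π, StrictMonoOn (fun t ↦ (t + a) * sin t) (Icc 0 M) ∧
      StrictAntiOn (fun t ↦ (t + a) * sin t) (Icc M π) := by
  set g : ℝ → ℝ := fun t ↦ sin t + (t + a) * cos t
  have hg : StrictAntiOn g (Icc (π / 2) π) := strictAntiOn_sin_add_add_mul_cos ha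
  have hg_left : g (π / 2) = 1 := by simp [g]
  have hg_right : g π = -(π + a) := by simp [g]
  obtain ⟨M, hM, hgM⟩ : (0 : ℝ) ∈ g '' Icc (π / 2) π :=
    intermediate_value_Icc' (by linarith [pi_pos]) (by fun_prop)
      ⟨by linarith [pi_pos], by linarith⟩
  have hMI : M ∈ Ioo (π / 2) π := ⟨lt_of_le_of_ne hM.1 (by rintro rfl; simp_all),
    lt_of_le_of_ne hM.2 (by rintro rfl; linarith [pi_pos])⟩
  have hderiv (x : ℝ) : deriv (fun t ↦ (t + a) * sin t) x = g x :=
    (hasDerivAt_add_mul_sin a x).deriv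
  refine ⟨M, hMI, strictMonoOn_of_deriv_pos (convex_Icc _ _) (by fun_prop) fun x hx ↦ ?_,
    strictAntiOn_of_deriv_neg (convex_Icc _ _) (by fun_prop) fun x hx ↦ ?_⟩
  · rw [interior_Icc] at hx
    rw [hderiv]
    rcases le_or_gt x (π / 2) with hx' | hx'
    · have hsin : 0 < sin x := sin_pos_of_pos_of_lt_pi hx.1 (by linarith [pi_pos])
      have hcos : 0 ≤ cos x := cos_nonneg_of_neg_pi_div_two_le_of_le (by linarith [hx.1]) hx'
      have : 0 ≤ (x + a) * cos x := mul_nonneg (by linarith [hx.1]) hcos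
      simp only [g]; linarith
    · exact hgM ▸ hg ⟨hx'.le, hx.2.le.trans hM.2⟩ hM hx.2
  · rw [interior_Icc] at hx
    rw [hderiv]
    exact hgM ▸ hg hM ⟨hM.1.trans hx.1.le, hx.2.le⟩ hx.1

theorem exists_matching_branch_add_mul_sin {a : ℝ} (ha : 0 ≤ a) :
    ∃ M ∈ Ioo (π / 2) π, ∃ α : ℝ → ℝ, ContinuousOn α (Icc 0 M) ∧
      MapsTo α (Icc 0 M) (Icc M π) ∧ α 0 = π ∧ α M = M ∧
      ∀ x ∈ Icc 0 M, (α x + a) * sin (α x) = (x + a) * sin x := by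
  obtain ⟨M, hM, hmono, hanti⟩ := exists_strictMonoOn_strictAntiOn_add_mul_sin ha
  exact ⟨M, hM, exists_matching_branch_of_strictMonoOn_of_strictAntiOn
    (by linarith [hM.1, pi_pos]) hM.2.le (by fun_prop) hmono hanti (by simp)⟩

/-- For `f(x) = (x + a) sin x` with `a > 0` and a nonnegative integer `k`, there exist
`M_k ∈ ((2k + 1/2)π, (2k+1)π)` and a continuous map `α : [2kπ, M_k] → [M_k, (2k+1)π]` with
`α(2kπ) = (2k+1)π`, `α(M_k) = M_k`, and `f(α(x)) = f(x)` on `[2kπ, M_k]`. -/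
theorem matching_branch_for_x_add_a_mul_sin
    (a : ℝ) (ha : 0 < a) (k : ℕ) :
    ∃ M : ℝ, (2 * (k : ℝ) + 1 / 2) * π < M ∧ M < (2 * (k : ℝ) + 1) * π ∧
      ∃ α : ℝ → ℝ,
        ContinuousOn α (Set.Icc (2 * (k : ℝ) * π) M) ∧
        Set.MapsTo α (Set.Icc (2 * (k : ℝ) * π) M) (Set.Icc M ((2 * (k : ℝ) + 1) * π)) ∧
        α (2 * (k : ℝ) * π) = (2 * (k : ℝ) + 1) * π ∧
        α M = M ∧
        ∀ x ∈ Set.Icc (2 * (k : ℝ) * π) M,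
          (α x + a) * Real.sin (α x) = (x + a) * Real.sin x := by
  set b : ℝ := 2 * k * π
  have hsin (x : ℝ) : sin (x + b) = sin x := by
    rw [show b = k * (2 * π) by ring, sin_add_nat_mul_two_pi]
  obtain ⟨M, ⟨hM₁, hM₂⟩, α, hcont, hmaps, hα₀, hαM, hα⟩ :=
    exists_matching_branch_add_mul_sin (a := a + b) (by positivity)
  refine ⟨M + b, by linarith, by linarith, fun x ↦ α (x - b) + b, ?_, ?_, ?_, ?_, ?_⟩
  · exact (hcont.comp (by fun_prop) fun x hx ↦ ⟨by linarith [hx.1], by linarith [hx.2]⟩).add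
      continuousOn_const
  · intro x hx
    have := hmaps (show x - b ∈ Icc 0 M from ⟨by linarith [hx.1], by linarith [hx.2]⟩)
    exact ⟨by linarith [this.1], by linarith [this.2]⟩
  · simp only [sub_self, hα₀]; ring
  · simp only [add_sub_cancel_right, hαM]
  · intro x hx
    have := hα (x - b) ⟨by linarith [hx.1], by linarith [hx.2]⟩
    calc (α (x - b) + b + a) * sin (α (x - b) + b)
        = (α (x - b) + (a + b)) * sin (α (x - b)) := by rw [hsin]; ring
      _ = (x - b + (a + b)) * sin (x - b) := this
      _ = (x + a) * sin x := by rw [← hsin (x - b), sub_add_cancel]; ring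
end

section
/- Consider the spiral 𝒮 = {ζ ∈ ℂ : ζ = r·e^{ir} for some real r ≥ 0}. Then for each complex number z ∈ ℂ there exist two elements ζ₁, ζ₂ ∈ 𝒮 such that ζ₁ − ζ₂ = z. That is, regarding 𝒮 as a subset of ℝ², one has 𝒮 − 𝒮 = ℝ². -/
/-!
Write `σ(t) = t e^{it}`. For `z ∈ ℂ` put `w(t) = e^{-it}(σ(t) + z) = t + z e^{-it}`. If
`arg w(t) = |w(t)| - t`, then `σ(t) + z = |w(t)| e^{i(arg w(t) + t)} = σ(|w(t)|)`. Once `t > |z|`,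
`w(t)` lies in the right half-plane, where `arg` is continuous, so `g(t) = |w(t)| - t - arg w(t)` is
continuous there. Choosing `a > |z|` with `z e^{-ia} = |z|`, we get `w(a) = a + |z|` and
`w(a + π) = a + π - |z|`, so `g(a) = |z|` and `g(a + π) = -|z|`, and the intermediate value
theorem gives a zero of `g`.
-/

namespace Complex

noncomputable def spiralPoint (t : ℝ) : ℂ := t * exp (t * I)

noncomputable def spiralOffset (z : ℂ) (t : ℝ) : ℂ := t + z * exp (-(t * I))

theorem mul_exp_neg_arg_mul_I (z : ℂ) : z * exp (-(z.arg * I)) = ‖z‖ := by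
  nth_rw 1 [← norm_mul_exp_arg_mul_I z]
  rw [mul_assoc, ← exp_add, add_neg_cancel, exp_zero, mul_one]

theorem exists_lt_mul_exp_neg_eq_norm (z : ℂ) (c : ℝ) :
    ∃ a, c < a ∧ z * exp (-(a * I)) = ‖z‖ := by
  obtain ⟨n, hn⟩ := exists_nat_gt ((c - z.arg) / (2 * Real.pi))
  refine ⟨z.arg + n * (2 * Real.pi), ?_, ?_⟩
  · linarith [(div_lt_iff₀ Real.two_pi_pos).mp hn]
  · have := exp_periodic.sub_nat_mul_eq (x := -(z.arg * I)) n
    push_cast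
    rw [show -((z.arg + n * (2 * Real.pi)) * I) = -(z.arg * I) - n * (2 * Real.pi * I) by ring,
      this, mul_exp_neg_arg_mul_I]

theorem spiralOffset_re_pos {z : ℂ} {t : ℝ} (h : ‖z‖ < t) : 0 < (spiralOffset z t).re := by
  have hre : -‖z * exp (-(t * I))‖ ≤ (z * exp (-(t * I))).re :=
    neg_le_of_abs_le (abs_re_le_norm _)
  have hexp : ‖exp (-(t * I))‖ = 1 := by simpa using norm_exp_ofReal_mul_I (-t)
  rw [norm_mul, hexp, mul_one] at hre
  simp only [spiralOffset, add_re, ofReal_re]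
  linarith

theorem continuousOn_spiralOffset_arg (z : ℂ) :
    ContinuousOn (fun t => arg (spiralOffset z t)) (Set.Ioi ‖z‖) := fun t ht =>
  ((continuousAt_arg (Or.inl (spiralOffset_re_pos ht))).comp
    (by unfold spiralOffset; fun_prop)).continuousWithinAt

theorem spiralPoint_norm_spiralOffset_sub {z : ℂ} {t : ℝ}
    (h : arg (spiralOffset z t) = ‖spiralOffset z t‖ - t) :
    spiralPoint ‖spiralOffset z t‖ - spiralPoint t = z := by
  set w := spiralOffset z t
  have hw : spiralPoint ‖w‖ = w * exp (t * I) := by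
    conv_rhs => rw [← norm_mul_exp_arg_mul_I w, h]
    rw [spiralPoint, mul_assoc, ← exp_add]
    push_cast; ring_nf
  rw [hw, show w = t + z * exp (-(t * I)) from rfl, spiralPoint, add_mul, mul_assoc, ← exp_add,
    neg_add_cancel, exp_zero]
  ring

theorem exists_nonneg_arg_spiralOffset_eq (z : ℂ) :
    ∃ t, 0 ≤ t ∧ arg (spiralOffset z t) = ‖spiralOffset z t‖ - t := by
  obtain ⟨a, hza, ha⟩ := exists_lt_mul_exp_neg_eq_norm z ‖z‖
  set g : ℝ → ℝ := fun t => ‖spiralOffset z t‖ - t - arg (spiralOffset z t)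
  have hg_real {t x : ℝ} (hx : 0 ≤ x) (h : spiralOffset z t = x) : g t = x - t := by
    simp only [g, h, norm_real, Real.norm_of_nonneg hx, arg_ofReal_of_nonneg hx]
    ring
  have hg_a : g a = ‖z‖ := by
    rw [hg_real (x := a + ‖z‖) (by linarith [norm_nonneg z])]
    · ring
    · rw [spiralOffset, ha]; push_cast; rfl
  have hg_b : g (a + Real.pi) = -‖z‖ := by
    rw [hg_real (x := a + Real.pi - ‖z‖) (by linarith [Real.pi_pos])]
    · ring
    · rw [spiralOffset,
        show -(((a + Real.pi : ℝ) : ℂ) * I) = -(a * I) - Real.pi * I by push_cast; ring,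
        exp_sub_pi_mul_I, mul_neg, ha]
      push_cast; ring
  have hg_cont : ContinuousOn g (Set.Icc a (a + Real.pi)) :=
    (((continuous_norm.comp (by unfold spiralOffset; fun_prop)).sub continuous_id).continuousOn.sub
      (continuousOn_spiralOffset_arg z)).mono fun t ht => lt_of_lt_of_le hza ht.1
  obtain ⟨t, ht, hgt⟩ := intermediate_value_Icc' (by linarith [Real.pi_pos]) hg_cont
    (show (0 : ℝ) ∈ Set.Icc (g (a + Real.pi)) (g a) by
      rw [hg_a, hg_b]; constructor <;> linarith [norm_nonneg z])
  exact ⟨t, by linarith [norm_nonneg z, ht.1], by linarith [show g t = 0 from hgt]⟩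

end Complex

/-- The Archimedean spiral `𝒮 = {r e^{ir} : r ≥ 0} ⊆ ℂ` satisfies `𝒮 − 𝒮 = ℝ²`: every complex
number is a difference of two points of the spiral. -/
theorem spiral_difference_set_is_whole_plane
    (S : Set ℂ)
    (hS : S = {ζ : ℂ | ∃ t : ℝ, 0 ≤ t ∧ ζ = (t : ℂ) * Complex.exp ((t : ℂ) * Complex.I)}) :
    ∀ z : ℂ, ∃ ζ₁ ∈ S, ∃ ζ₂ ∈ S, ζ₁ - ζ₂ = z := by
  subst hS
  intro z
  obtain ⟨t, ht, harg⟩ := Complex.exists_nonneg_arg_spiralOffset_eq z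
  exact ⟨_, ⟨_, norm_nonneg _, rfl⟩, _, ⟨t, ht, rfl⟩,
    Complex.spiralPoint_norm_spiralOffset_sub harg⟩
end

section
/- Consider the subset ℛ = {(ζ, ξ) ∈ ℂ × ℝ : ζ = e^{ir}, ξ = e^{r}·sin(2r) for some real r ≥ 0} of ℂ × ℝ ≅ ℝ³. Then for each w ∈ ℂ × ℝ there exist two elements ω₁, ω₂ ∈ ℛ and a real number χ > 0 such that ω₁ − ω₂ = χ·w. In particular, every unit vector of ℝ³ is a unit secant of ℛ: sec(ℛ) = S². -/
/-!
Write `γ t = (e^{it}, e^t sin 2t)`. A symmetric chord `γ (μ + δ) - γ (μ - δ)` has horizontal part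
`2 sin δ · i e^{iμ}`, a positive multiple of `z` as soon as `μ ≡ arg z - π/2 (mod 2π)` and
`0 < δ < π`, and vertical part `e^μ · h (2μ) δ` with
`h θ δ = e^δ sin (θ + 2δ) - e^{-δ} sin (θ - 2δ)`. For every `θ`, `h θ` takes both signs on `(0, π)`,
so once `μ` is large in its residue class the factor `e^μ` beats the required vertical part
`2 sin δ · x / |z|` at those two points, and the intermediate value theorem produces `δ`.
Vertical directions `(0, x)` are realised by the chords `γ (t + 2π) - γ t`.
-/

open Real Filter Set

noncomputable def curvePoint (t : ℝ) : ℂ × ℝ :=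
  (Complex.exp (t * Complex.I), Real.exp t * Real.sin (2 * t))

noncomputable def chordHeight (θ δ : ℝ) : ℝ :=
  Real.exp δ * Real.sin (θ + 2 * δ) - Real.exp (-δ) * Real.sin (θ - 2 * δ)

lemma curvePoint_add_sub_curvePoint_sub (μ δ : ℝ) :
    curvePoint (μ + δ) - curvePoint (μ - δ) =
      (2 * Real.sin δ * (Complex.I * Complex.exp (μ * Complex.I)),
        Real.exp μ * chordHeight (2 * μ) δ) := by
  refine Prod.ext ?_ ?_
  · rw [sub_eq_add_neg μ]
    simp only [curvePoint, Prod.fst_sub, Complex.ofReal_add, Complex.ofReal_neg, add_mul, neg_mul,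
      Complex.exp_add, Complex.ofReal_sin, Complex.sin]
    linear_combination (Complex.exp (δ * Complex.I) - Complex.exp (-(δ * Complex.I))) *
      Complex.exp (μ * Complex.I) * Complex.I_sq
  · simp only [curvePoint, chordHeight, Prod.snd_sub, sub_eq_add_neg μ δ, Real.exp_add]
    ring_nf

lemma chordHeight_eq (θ δ : ℝ) :
    chordHeight θ δ = 2 * (Real.sin θ * Real.cos (2 * δ) * Real.sinh δ
      + Real.cos θ * Real.sin (2 * δ) * Real.cosh δ) := by
  rw [chordHeight, Real.sin_add, Real.sin_sub, Real.sinh_eq, Real.cosh_eq]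
  ring

lemma chordHeight_periodic (δ : ℝ) : Function.Periodic (chordHeight · δ) (2 * π) := by
  intro θ
  simp only [chordHeight_eq, Real.sin_add_two_pi, Real.cos_add_two_pi]

lemma continuous_chordHeight (θ : ℝ) : Continuous (chordHeight θ) := by
  unfold chordHeight
  fun_prop

lemma chordHeight_pi_div_four (θ : ℝ) :
    chordHeight θ (π / 4) = 2 * Real.cosh (π / 4) * Real.cos θ := by
  rw [chordHeight_eq, show 2 * (π / 4) = π / 2 by ring, Real.cos_pi_div_two, Real.sin_pi_div_two]
  ring

lemma chordHeight_three_pi_div_four (θ : ℝ) :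
    chordHeight θ (3 * π / 4) = -(2 * Real.cosh (3 * π / 4) * Real.cos θ) := by
  rw [chordHeight_eq, show 2 * (3 * π / 4) = π / 2 + π by ring, Real.cos_add_pi,
    Real.sin_add_pi, Real.cos_pi_div_two, Real.sin_pi_div_two]
  ring

lemma chordHeight_pi_div_two (θ : ℝ) :
    chordHeight θ (π / 2) = -(2 * Real.sinh (π / 2) * Real.sin θ) := by
  rw [chordHeight_eq, show 2 * (π / 2) = π by ring, Real.cos_pi, Real.sin_pi]
  ring

lemma chordHeight_pi_div_six {θ : ℝ} (hθ : Real.cos θ = 0) :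
    chordHeight θ (π / 6) = Real.sinh (π / 6) * Real.sin θ := by
  rw [chordHeight_eq, show 2 * (π / 6) = π / 3 by ring, Real.cos_pi_div_three, hθ]
  ring

lemma exists_chordHeight_neg_pos (θ : ℝ) :
    ∃ δ₁ ∈ Ioo 0 π, ∃ δ₂ ∈ Ioo 0 π, chordHeight θ δ₁ < 0 ∧ 0 < chordHeight θ δ₂ := by
  have hπ := Real.pi_pos
  have h4 : π / 4 ∈ Ioo 0 π := ⟨by positivity, by linarith⟩
  have h34 : 3 * π / 4 ∈ Ioo 0 π := ⟨by positivity, by linarith⟩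
  have h2 : π / 2 ∈ Ioo 0 π := ⟨by positivity, by linarith⟩
  have h6 : π / 6 ∈ Ioo 0 π := ⟨by positivity, by linarith⟩
  have hc4 := Real.cosh_pos (π / 4)
  have hc34 := Real.cosh_pos (3 * π / 4)
  have hs2 : 0 < Real.sinh (π / 2) := Real.sinh_pos_iff.2 (by positivity)
  have hs6 : 0 < Real.sinh (π / 6) := Real.sinh_pos_iff.2 (by positivity)
  rcases lt_trichotomy (Real.cos θ) 0 with hcos | hcos | hcos
  · refine ⟨π / 4, h4, 3 * π / 4, h34, ?_, ?_⟩
    · rw [chordHeight_pi_div_four]; nlinarith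
    · rw [chordHeight_three_pi_div_four]; nlinarith
  · have hsin : Real.sin θ ≠ 0 := by
      intro hsin
      simpa [hsin, hcos] using Real.sin_sq_add_cos_sq θ
    rcases hsin.lt_or_gt with hsin | hsin
    · refine ⟨π / 6, h6, π / 2, h2, ?_, ?_⟩
      · rw [chordHeight_pi_div_six hcos]; nlinarith
      · rw [chordHeight_pi_div_two]; nlinarith
    · refine ⟨π / 2, h2, π / 6, h6, ?_, ?_⟩
      · rw [chordHeight_pi_div_two]; nlinarith
      · rw [chordHeight_pi_div_six hcos]; nlinarith
  · refine ⟨3 * π / 4, h34, π / 4, h4, ?_, ?_⟩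
    · rw [chordHeight_three_pi_div_four]; nlinarith
    · rw [chordHeight_pi_div_four]; nlinarith

lemma exists_mul_chordHeight_eq (θ c : ℝ) :
    ∃ M, ∀ E, M < E → ∃ δ ∈ Ioo 0 π, E * chordHeight θ δ = c * Real.sin δ := by
  obtain ⟨δ₁, hδ₁, δ₂, hδ₂, hneg, hpos⟩ := exists_chordHeight_neg_pos θ
  refine ⟨max (|c| / -chordHeight θ δ₁) (|c| / chordHeight θ δ₂), fun E hE => ?_⟩
  have hsin : ∀ δ, |c * Real.sin δ| ≤ |c| := fun δ => by
    rw [abs_mul]; exact mul_le_of_le_one_right (abs_nonneg c) (Real.abs_sin_le_one δ)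
  have h₁ : |c| < E * -chordHeight θ δ₁ :=
    (div_lt_iff₀ (neg_pos.2 hneg)).1 ((le_max_left _ _).trans_lt hE)
  have h₂ : |c| < E * chordHeight θ δ₂ :=
    (div_lt_iff₀ hpos).1 ((le_max_right _ _).trans_lt hE)
  set F := fun δ => E * chordHeight θ δ - c * Real.sin δ
  have hF : Continuous F := by
    have := continuous_chordHeight θ
    fun_prop
  have hF₀ : (0 : ℝ) ∈ uIcc (F δ₁) (F δ₂) := by
    refine mem_uIcc.2 (Or.inl ⟨?_, ?_⟩)
    · linarith [(abs_le.1 (hsin δ₁)).1]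
    · linarith [(abs_le.1 (hsin δ₂)).2]
  obtain ⟨δ, hδ, hFδ⟩ := intermediate_value_uIcc hF.continuousOn hF₀
  exact ⟨δ, ordConnected_Ioo.uIcc_subset hδ₁ hδ₂ hδ, sub_eq_zero.1 hFδ⟩

lemma norm_mul_I_mul_exp_arg_sub_pi_div_two (z : ℂ) (k : ℕ) :
    (‖z‖ : ℂ) * (Complex.I * Complex.exp (↑(Complex.arg z - π / 2 + 2 * π * k) * Complex.I)) =
      z := by
  have hI : ∀ y : ℂ, Complex.I * Complex.exp (y * Complex.I) =
      Complex.exp ((π / 2 + y) * Complex.I) := fun y => by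
    rw [add_mul, Complex.exp_add, Complex.exp_pi_div_two_mul_I]
  have hk := (Complex.exp_mul_I_periodic.nat_mul k) (Complex.arg z)
  rw [hI]
  push_cast at hk ⊢
  rw [show (π / 2 : ℂ) + (Complex.arg z - π / 2 + 2 * π * k) = Complex.arg z + k * (2 * π) by ring,
    hk, Complex.norm_mul_exp_arg_mul_I]

lemma exists_nat_pi_le_and_exp_gt (μ₀ C : ℝ) :
    ∃ k : ℕ, π ≤ μ₀ + 2 * π * k ∧ C < Real.exp (μ₀ + 2 * π * k) := by
  have h : Tendsto (fun k : ℕ => μ₀ + 2 * π * k) atTop atTop :=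
    tendsto_atTop_add_const_left _ _
      (tendsto_natCast_atTop_atTop.const_mul_atTop (by positivity))
  exact ((h.eventually_ge_atTop π).and ((tendsto_exp_atTop.comp h).eventually_gt_atTop C)).exists

lemma exists_curvePoint_sub_eq_smul_of_ne_zero {z : ℂ} (hz : z ≠ 0) (x : ℝ) :
    ∃ s ≥ (0 : ℝ), ∃ t ≥ (0 : ℝ), ∃ χ > (0 : ℝ), curvePoint s - curvePoint t = χ • (z, x) := by
  set μ₀ := Complex.arg z - π / 2
  obtain ⟨M, hM⟩ := exists_mul_chordHeight_eq (2 * μ₀) (2 * x / ‖z‖)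
  obtain ⟨k, hkπ, hkM⟩ := exists_nat_pi_le_and_exp_gt μ₀ M
  obtain ⟨δ, ⟨hδ₀, hδπ⟩, hδ⟩ := hM _ hkM
  have hsin := Real.sin_pos_of_pos_of_lt_pi hδ₀ hδπ
  have hnorm := norm_pos_iff.2 hz
  have hperiod : chordHeight (2 * (μ₀ + 2 * π * k)) δ = chordHeight (2 * μ₀) δ := by
    have h := (chordHeight_periodic δ).nat_mul (2 * k) (2 * μ₀)
    rw [← h]
    congr 1
    push_cast
    ring
  refine ⟨μ₀ + 2 * π * k + δ, by linarith, μ₀ + 2 * π * k - δ, by linarith,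
    2 * Real.sin δ / ‖z‖, by positivity, ?_⟩
  rw [curvePoint_add_sub_curvePoint_sub, hperiod, hδ]
  refine Prod.ext ?_ ?_
  · have hz' : (‖z‖ : ℂ) * (Complex.I * Complex.exp (↑(μ₀ + 2 * π * k) * Complex.I)) = z :=
      norm_mul_I_mul_exp_arg_sub_pi_div_two z k
    have hnorm' : (‖z‖ : ℂ) ≠ 0 := by exact_mod_cast hnorm.ne'
    simp only [Prod.smul_fst, Complex.real_smul]
    push_cast at hz' ⊢
    field_simp
    linear_combination (norm := ring_nf) Complex.sin δ * hz'
  · simp only [Prod.smul_snd, smul_eq_mul]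
    ring

lemma exists_curvePoint_sub_eq_smul_zero (x : ℝ) :
    ∃ s ≥ (0 : ℝ), ∃ t ≥ (0 : ℝ), ∃ χ > (0 : ℝ),
      curvePoint s - curvePoint t = χ • ((0 : ℂ), x) := by
  have hπ := Real.pi_pos
  set V := Real.exp (π / 4 + 2 * π) - Real.exp (π / 4)
  have hV : 0 < V := sub_pos.2 (Real.exp_lt_exp.2 (by linarith))
  have hloop : curvePoint (π / 4 + 2 * π) - curvePoint (π / 4) = (0, V) := by
    refine Prod.ext ?_ ?_
    · simp [curvePoint, add_mul, Complex.exp_add]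
    · simp only [curvePoint, Prod.snd_sub, V]
      rw [show 2 * (π / 4 + 2 * π) = π / 2 + 2 * π + 2 * π by ring,
        show 2 * (π / 4) = π / 2 by ring, Real.sin_add_two_pi, Real.sin_add_two_pi,
        Real.sin_pi_div_two]
      ring
  rcases lt_trichotomy x 0 with hx | rfl | hx
  · refine ⟨π / 4, by positivity, π / 4 + 2 * π, by positivity, V / -x,
      div_pos hV (neg_pos.2 hx), ?_⟩
    rw [← neg_sub, hloop, Prod.neg_mk, Prod.smul_mk, neg_zero, smul_zero, smul_eq_mul,
      div_neg, neg_mul, div_mul_cancel₀ V hx.ne]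
  · exact ⟨0, le_rfl, 0, le_rfl, 1, one_pos, by ext <;> simp⟩
  · refine ⟨π / 4 + 2 * π, by positivity, π / 4, by positivity, V / x, div_pos hV hx, ?_⟩
    rw [hloop, Prod.smul_mk, smul_zero, smul_eq_mul, div_mul_cancel₀ V hx.ne']

lemma exists_curvePoint_sub_eq_smul (w : ℂ × ℝ) :
    ∃ s ≥ (0 : ℝ), ∃ t ≥ (0 : ℝ), ∃ χ > (0 : ℝ), curvePoint s - curvePoint t = χ • w := by
  obtain ⟨z, x⟩ := w
  rcases eq_or_ne z 0 with rfl | hz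
  · exact exists_curvePoint_sub_eq_smul_zero x
  · exact exists_curvePoint_sub_eq_smul_of_ne_zero hz x

/-- The curve `ℛ = {(e^{ir}, e^r sin 2r) : r ≥ 0} ⊆ ℂ × ℝ ≅ ℝ³` has every direction as a
secant: for each `w ∈ ℂ × ℝ` there are `ω₁, ω₂ ∈ ℛ` and `χ > 0` with `ω₁ − ω₂ = χ • w`;
in particular `sec(ℛ) = S²`. -/
theorem secants_of_R_fill_sphere
    (R : Set (ℂ × ℝ))
    (hR : R = {p : ℂ × ℝ | ∃ t : ℝ, 0 ≤ t ∧
      p = (Complex.exp ((t : ℂ) * Complex.I), Real.exp t * Real.sin (2 * t))}) :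
    ∀ w : ℂ × ℝ, ∃ ω₁ ∈ R, ∃ ω₂ ∈ R, ∃ χ : ℝ, 0 < χ ∧ ω₁ - ω₂ = χ • w := by
  subst hR
  intro w
  obtain ⟨s, hs, t, ht, χ, hχ, h⟩ := exists_curvePoint_sub_eq_smul w
  exact ⟨_, ⟨s, hs, rfl⟩, _, ⟨t, ht, rfl⟩, χ, hχ, h⟩
end

section
/- Fix a positive integer r. Let 𝒮 = {t·e^{it} : t ≥ 0} ⊆ ℂ, let ℛ = {(e^{it}, e^{t}·sin(2t)) : t ≥ 0} ⊆ ℂ × ℝ, and let ℛ_r := 𝒮^{r−1} × ℛ, regarded as a subset of ℂ^{r−1} × ℂ × ℝ ≅ ℝ^{2r+1}. Then every unit vector of ℝ^{2r+1} is a unit secant of ℛ_r: for every θ ∈ ℂ^{r−1} × ℂ × ℝ with ‖θ‖ = 1 there exist a₁, a₂ ∈ ℛ_r with a₁ ≠ a₂ and (a₁ − a₂)/‖a₁ − a₂‖ = θ. Equivalently, for every w ∈ ℂ^{r−1} × ℂ × ℝ there exist a₁, a₂ ∈ ℛ_r and χ > 0 with a₁ − a₂ = χ·w. -/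
open Real Complex

lemma exp_real_mul_I (θ : ℝ) :
    Complex.exp ((θ : ℂ) * Complex.I) = (Real.cos θ : ℂ) + (Real.sin θ : ℂ) * Complex.I := by
  rw [Complex.exp_mul_I, Complex.ofReal_cos, Complex.ofReal_sin]

lemma chord_eq (c β ℓ : ℝ) (hβ : 0 < β) (hcos : 0 < Real.cos β) (hsin : 0 < Real.sin β)
    (hℓ : 0 < ℓ) (hc : 0 < c)
    (hsum : (β * Real.cos β)^2 + (c * Real.sin β)^2 = ℓ^2/4) :
    ((c + β : ℝ) : ℂ) * Complex.exp (((c + β : ℝ) : ℂ) * Complex.I)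
      - ((c - β : ℝ) : ℂ) * Complex.exp (((c - β : ℝ) : ℂ) * Complex.I)
    = (ℓ : ℂ) * Complex.exp
        (((c + Real.arctan (c * Real.sin β / (β * Real.cos β)) : ℝ) : ℂ) * Complex.I) := by
  set x := β * Real.cos β with hx
  set yy := c * Real.sin β with hy
  have hxpos : 0 < x := by positivity
  have hypos : 0 < yy := by positivity
  have h1u : 1 + (yy/x)^2 = (ℓ/(2*x))^2 := by
    field_simp
    nlinarith [hsum]
  have hsq : Real.sqrt (1 + (yy/x)^2) = ℓ/(2*x) := by
    rw [h1u, Real.sqrt_sq (by positivity)]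
  have hcosψ : Real.cos (Real.arctan (yy/x)) = 2*x/ℓ := by
    rw [Real.cos_arctan, hsq]
    field_simp
  have hsinψ : Real.sin (Real.arctan (yy/x)) = 2*yy/ℓ := by
    rw [Real.sin_arctan, hsq]
    field_simp
  have key : ∀ a b : ℝ, Complex.exp (((a + b : ℝ) : ℂ) * Complex.I)
      = Complex.exp ((a:ℂ) * Complex.I) * ((Real.cos b : ℂ) + (Real.sin b : ℂ) * Complex.I) := by
    intro a b
    rw [← exp_real_mul_I, ← Complex.exp_add]
    push_cast
    ring_nf
  have h1 : ((c + β : ℝ) : ℂ) * Complex.exp (((c + β : ℝ) : ℂ) * Complex.I)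
      - ((c - β : ℝ) : ℂ) * Complex.exp (((c - β : ℝ) : ℂ) * Complex.I)
      = Complex.exp ((c:ℂ) * Complex.I) * (2 * (x:ℂ) + 2 * (yy:ℂ) * Complex.I) := by
    rw [key c β, show ((c - β : ℝ) : ℂ) * Complex.exp (((c - β : ℝ) : ℂ) * Complex.I)
        = ((c - β : ℝ) : ℂ) * (Complex.exp ((c:ℂ) * Complex.I)
          * ((Real.cos (-β) : ℂ) + (Real.sin (-β) : ℂ) * Complex.I)) from by
      rw [show (c : ℝ) - β = c + (-β) by ring, key c (-β)]]
    rw [Real.cos_neg, Real.sin_neg, hx, hy]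
    push_cast
    ring
  rw [h1, key c (Real.arctan (yy/x)), hcosψ, hsinψ]
  have hℓne : (ℓ:ℂ) ≠ 0 := by exact_mod_cast hℓ.ne'
  push_cast
  field_simp


lemma arctan_nonneg' {u : ℝ} (h : 0 ≤ u) : 0 ≤ Real.arctan u := by
  simpa [Real.arctan_zero] using Real.arctan_strictMono.monotone h

noncomputable def spiralC (ℓ β : ℝ) : ℝ :=
  Real.sqrt (ℓ^2/4 - (β * Real.cos β)^2) / Real.sin β

noncomputable def spiralD (ℓ β : ℝ) : ℝ :=
  spiralC ℓ β + Real.arctan (spiralC ℓ β * Real.sin β / (β * Real.cos β))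

lemma spiralD_contOn (ℓ β₀ m : ℝ) (hβ₀0 : 0 < β₀) (hmπ : m ≤ π/4) :
    ContinuousOn (spiralD ℓ) (Set.Icc β₀ m) := by
  have hπ : (0:ℝ) < π := Real.pi_pos
  have hmem : ∀ β ∈ Set.Icc β₀ m, Real.sin β ≠ 0 ∧ β * Real.cos β ≠ 0 := by
    intro β hβ
    have hβ0 : 0 < β := lt_of_lt_of_le hβ₀0 hβ.1
    have hβπ : β < π := by nlinarith [hβ.2]
    have hs : 0 < Real.sin β := Real.sin_pos_of_pos_of_lt_pi hβ0 hβπ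
    have hcosβ : 0 < Real.cos β :=
      Real.cos_pos_of_mem_Ioo ⟨by nlinarith [hβ.2], by nlinarith [hβ.2]⟩
    exact ⟨hs.ne', (mul_pos hβ0 hcosβ).ne'⟩
  have hccont : ContinuousOn (spiralC ℓ) (Set.Icc β₀ m) := by
    unfold spiralC
    apply ContinuousOn.div
    · exact (Real.continuous_sqrt.comp
        (continuous_const.sub ((continuous_id.mul Real.continuous_cos).pow 2))).continuousOn
    · exact Real.continuous_sin.continuousOn
    · exact fun β hβ => (hmem β hβ).1
  unfold spiralD
  apply ContinuousOn.add hccont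
  apply Real.continuous_arctan.comp_continuousOn
  apply ContinuousOn.div (hccont.mul Real.continuous_sin.continuousOn)
  · exact (continuous_id.mul Real.continuous_cos).continuousOn
  · exact fun β hβ => (hmem β hβ).2

lemma spiral_core (ℓ φ : ℝ) (hℓ : 0 < ℓ) (hφl : -π < φ) (hφu : φ ≤ π) :
    ∃ t s : ℝ, 0 ≤ t ∧ 0 ≤ s ∧
    (t : ℂ) * Complex.exp ((t : ℂ) * Complex.I)
      - (s : ℂ) * Complex.exp ((s : ℂ) * Complex.I)
      = (ℓ : ℂ) * Complex.exp ((φ : ℂ) * Complex.I) := by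
  have hπ : (0:ℝ) < π := Real.pi_pos
  obtain ⟨m, hm0, hmπ, hmℓ⟩ : ∃ m : ℝ, 0 < m ∧ m ≤ π/4 ∧ m ≤ ℓ/2 :=
    ⟨min (ℓ/2) (π/4), lt_min (by linarith) (by linarith), min_le_right _ _, min_le_left _ _⟩
  -- basic facts on (0, m]
  have hfacts : ∀ β : ℝ, 0 < β → β ≤ m →
      0 < Real.sin β ∧ 0 < Real.cos β ∧ 0 ≤ ℓ^2/4 - (β * Real.cos β)^2 := by
    intro β hβ0 hβm
    have hβπ : β < π := by nlinarith
    have hs : 0 < Real.sin β := Real.sin_pos_of_pos_of_lt_pi hβ0 hβπ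
    have hcosβ : 0 < Real.cos β := Real.cos_pos_of_mem_Ioo ⟨by nlinarith, by nlinarith⟩
    have hxle : β * Real.cos β ≤ ℓ/2 := by
      have := Real.cos_le_one β
      nlinarith
    have hxpos : 0 < β * Real.cos β := by positivity
    exact ⟨hs, hcosβ, by nlinarith⟩
  -- choose the target angle T
  obtain ⟨T, K, hTK, hTπ, hTDm⟩ :
      ∃ (T : ℝ) (K : ℕ), T = φ + 2*π*K ∧ π ≤ T ∧ spiralD ℓ m ≤ T := by
    obtain ⟨K, hK⟩ := exists_nat_ge ((max (spiralD ℓ m) π - φ) / (2*π))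
    have h2 : max (spiralD ℓ m) π - φ ≤ 2*π*K := by
      rw [div_le_iff₀ (by positivity)] at hK
      linarith [hK]
    exact ⟨φ + 2*π*K, K, rfl,
      by linarith [le_max_right (spiralD ℓ m) π],
      by linarith [le_max_left (spiralD ℓ m) π]⟩
  have hT0 : 0 < T := by linarith
  obtain ⟨β₀, hβ₀0, hβ₀m, hβ₀T⟩ : ∃ β₀ : ℝ, 0 < β₀ ∧ β₀ ≤ m ∧ β₀ ≤ ℓ/(4*T) :=
    ⟨min m (ℓ/(4*T)), lt_min hm0 (by positivity), min_le_left _ _, min_le_right _ _⟩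
  -- lower bound for spiralD ℓ β₀
  have hDβ₀ : T ≤ spiralD ℓ β₀ := by
    obtain ⟨hs, hcosβ, hinner⟩ := hfacts β₀ hβ₀0 hβ₀m
    have hcos2 : Real.cos β₀ ^ 2 ≤ 1 := by
      nlinarith [Real.cos_le_one β₀, hcosβ]
    have hsqrt : ℓ/4 ≤ Real.sqrt (ℓ^2/4 - (β₀ * Real.cos β₀)^2) := by
      have hβ₀ℓ : β₀ ≤ ℓ/4 := by
        have h1T : 1 ≤ T := by linarith [Real.pi_gt_three]
        calc β₀ ≤ ℓ/(4*T) := hβ₀T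
          _ ≤ ℓ/4 := by
            apply div_le_div_of_nonneg_left hℓ.le (by positivity)
            nlinarith
      rw [show ℓ/4 = Real.sqrt ((ℓ/4)^2) from (Real.sqrt_sq (by positivity)).symm]
      apply Real.sqrt_le_sqrt
      have h1 : (β₀ * Real.cos β₀)^2 ≤ β₀^2 := by
        nlinarith [mul_nonneg (sq_nonneg β₀) (by linarith : (0:ℝ) ≤ 1 - Real.cos β₀^2)]
      nlinarith
    have hcβ₀ : T ≤ spiralC ℓ β₀ := by
      have hsinle : Real.sin β₀ ≤ β₀ := Real.sin_le hβ₀0.le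
      have h2 : T ≤ (ℓ/4) / β₀ := by
        rw [le_div_iff₀ hβ₀0]
        calc T * β₀ ≤ T * (ℓ/(4*T)) := mul_le_mul_of_nonneg_left hβ₀T hT0.le
          _ = ℓ/4 := by field_simp
      have h3 : (ℓ/4) / β₀ ≤ Real.sqrt (ℓ^2/4 - (β₀ * Real.cos β₀)^2) / β₀ := by gcongr
      have h4 : Real.sqrt (ℓ^2/4 - (β₀ * Real.cos β₀)^2) / β₀ ≤ spiralC ℓ β₀ := by
        unfold spiralC
        exact div_le_div_of_nonneg_left (Real.sqrt_nonneg _) hs hsinle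
      linarith
    have harct : 0 ≤ Real.arctan (spiralC ℓ β₀ * Real.sin β₀ / (β₀ * Real.cos β₀)) :=
      arctan_nonneg' (div_nonneg (mul_nonneg (by linarith) hs.le)
        (mul_pos hβ₀0 hcosβ).le)
    unfold spiralD
    linarith
  -- IVT
  obtain ⟨β', hβ'mem, hβ'T⟩ :=
    intermediate_value_Icc' hβ₀m (spiralD_contOn ℓ β₀ m hβ₀0 hmπ) ⟨hTDm, hDβ₀⟩
  obtain ⟨hβ'l, hβ'u⟩ := hβ'mem
  have hβ'0 : 0 < β' := lt_of_lt_of_le hβ₀0 hβ'l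
  obtain ⟨hs, hcosβ, hinner⟩ := hfacts β' hβ'0 hβ'u
  have hcoslt : Real.cos β' < 1 := by nlinarith [Real.sin_sq_add_cos_sq β']
  have hxlt : β' * Real.cos β' < β' := by
    have := mul_lt_mul_of_pos_left hcoslt hβ'0
    simpa using this
  have hxpos : 0 < β' * Real.cos β' := mul_pos hβ'0 hcosβ
  have hβ'ℓ2 : β' ≤ ℓ/2 := le_trans hβ'u hmℓ
  have hinner' : 0 < ℓ^2/4 - (β' * Real.cos β')^2 := by
    have hxltℓ : β' * Real.cos β' < ℓ/2 := lt_of_lt_of_le hxlt hβ'ℓ2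
    have hsq : (β' * Real.cos β')^2 < (ℓ/2)^2 := sq_lt_sq' (by linarith) hxltℓ
    have hid : (ℓ/2)^2 = ℓ^2/4 := by ring
    linarith
  have hcβ' : 0 < spiralC ℓ β' := by
    unfold spiralC
    exact div_pos (Real.sqrt_pos.mpr hinner') hs
  have hsum : (β' * Real.cos β')^2 + (spiralC ℓ β' * Real.sin β')^2 = ℓ^2/4 := by
    have h1 : spiralC ℓ β' * Real.sin β' = Real.sqrt (ℓ^2/4 - (β' * Real.cos β')^2) := by
      unfold spiralC
      exact div_mul_cancel₀ _ hs.ne'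
    rw [h1, Real.sq_sqrt hinner]
    ring
  have hchord := chord_eq (spiralC ℓ β') β' ℓ hβ'0 hcosβ hs hℓ hcβ' hsum
  have hangle : spiralC ℓ β'
      + Real.arctan (spiralC ℓ β' * Real.sin β' / (β' * Real.cos β')) = T := hβ'T
  rw [hangle] at hchord
  have hexpT : Complex.exp ((T : ℂ) * Complex.I) = Complex.exp ((φ:ℂ) * Complex.I) := by
    rw [hTK]
    push_cast
    rw [show ((φ:ℂ) + 2*(π:ℂ)*(K:ℕ)) * Complex.I
        = (φ:ℂ)*Complex.I + (K:ℕ)*(2*(π:ℂ)*Complex.I) by push_cast; ring]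
    rw [Complex.exp_add, Complex.exp_nat_mul_two_pi_mul_I, mul_one]
  rw [hexpT] at hchord
  refine ⟨spiralC ℓ β' + β', spiralC ℓ β' - β', by positivity, ?_, hchord⟩
  have harctlt : Real.arctan (spiralC ℓ β' * Real.sin β' / (β' * Real.cos β')) < π/2 :=
    Real.arctan_lt_pi_div_two _
  have h5 : β' ≤ π/4 := le_trans hβ'u hmπ
  linarith


lemma exp_split (x y : ℝ) : Complex.exp (((x + y : ℝ):ℂ) * Complex.I)
    = Complex.exp ((x:ℂ) * Complex.I) * Complex.exp ((y:ℂ) * Complex.I) := by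
  rw [← Complex.exp_add]
  push_cast
  ring_nf

lemma exp_real_mul_I' (θ : ℝ) :
    Complex.exp ((θ : ℂ) * Complex.I) = (Real.cos θ : ℂ) + (Real.sin θ : ℂ) * Complex.I := by
  rw [Complex.exp_mul_I, Complex.ofReal_cos, Complex.ofReal_sin]

lemma exp_two_pi_nat (M : ℕ) : Complex.exp (((2*π*M : ℝ):ℂ) * Complex.I) = 1 := by
  rw [show ((2*π*M : ℝ):ℂ) * Complex.I = (M:ℕ) * (2*(π:ℝ) * Complex.I) by push_cast; ring]
  exact_mod_cast Complex.exp_nat_mul_two_pi_mul_I M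

lemma circle_chord (φ μ β : ℝ) (M : ℕ) (hμ : μ = φ - π/2 + 4*π) :
    Complex.exp (((μ + β + 2*π*M : ℝ):ℂ) * Complex.I)
      - Complex.exp (((μ - β : ℝ):ℂ) * Complex.I)
    = 2 * (Real.sin β : ℂ) * Complex.exp ((φ:ℂ) * Complex.I) := by
  have h1 : Complex.exp (((μ + β + 2*π*M : ℝ):ℂ) * Complex.I)
      = Complex.exp ((μ:ℂ) * Complex.I) * Complex.exp ((β:ℂ) * Complex.I) := by
    rw [show (μ + β + 2*π*M : ℝ) = (μ + β) + 2*π*M by ring, exp_split, exp_split,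
      exp_two_pi_nat, mul_one]
  have h2 : Complex.exp (((μ - β : ℝ):ℂ) * Complex.I)
      = Complex.exp ((μ:ℂ) * Complex.I) * Complex.exp (((-β:ℝ):ℂ) * Complex.I) := by
    rw [show (μ - β : ℝ) = μ + (-β) by ring, exp_split]
  have hmpi : Complex.exp ((((-(π/2)):ℝ):ℂ) * Complex.I) = -Complex.I := by
    rw [exp_real_mul_I']
    simp
  have h3 : Complex.exp ((μ:ℂ) * Complex.I)
      = Complex.exp ((φ:ℂ) * Complex.I) * (-Complex.I) := by
    rw [hμ, show (φ - π/2 + 4*π : ℝ) = (φ + (-(π/2))) + 2*π*(2:ℕ) by push_cast; ring,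
      exp_split, exp_two_pi_nat, mul_one, exp_split, hmpi]
  rw [h1, h2, h3, exp_real_mul_I' β, exp_real_mul_I' (-β), Real.cos_neg, Real.sin_neg]
  push_cast
  ring_nf
  rw [Complex.I_sq]
  ring

noncomputable def Hfun (μ y ℓ : ℝ) (M : ℕ) (β : ℝ) : ℝ :=
  Real.exp (μ + β + 2*π*M) * Real.sin (2*μ + 2*β)
    - Real.exp (μ - β) * Real.sin (2*μ - 2*β) - 2 * Real.sin β * y / ℓ

lemma Hfun_cont (μ y ℓ : ℝ) (M : ℕ) : Continuous (Hfun μ y ℓ M) := by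
  unfold Hfun
  fun_prop

lemma exp_ge_nat (a : ℝ) (M : ℕ) (ha : 0 ≤ a) : (M : ℝ) ≤ Real.exp (a + 2*π*M) := by
  have h1 := Real.add_one_le_exp (a + 2*π*M)
  have h2 : (0:ℝ) ≤ (M:ℝ) := Nat.cast_nonneg M
  nlinarith [Real.pi_gt_three]

lemma sqrt_two_le_two : Real.sqrt 2 ≤ 2 := by
  nlinarith [Real.sq_sqrt (by norm_num : (0:ℝ) ≤ 2), Real.sqrt_nonneg 2]

set_option maxHeartbeats 2000000 in
lemma Hfun_root (μ y ℓ : ℝ) (hℓ : 0 < ℓ) (hμ : 5*π/2 ≤ μ) :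
    ∃ (M : ℕ) (β : ℝ), 0 < β ∧ β < π ∧ Hfun μ y ℓ M β = 0 := by
  have hπ : (0:ℝ) < π := Real.pi_pos
  have hμ0 : 0 ≤ μ := by linarith
  by_cases hsμ : Real.sin (2*μ) = 0
  · -- sin 2μ = 0
    set ε := Real.cos (2*μ) with hε
    have hεpm : ε = 1 ∨ ε = -1 := by
      have h1 : (ε - 1) * (ε + 1) = 0 := by
        have := Real.sin_sq_add_cos_sq (2*μ)
        rw [hsμ] at this
        nlinarith
      rcases mul_eq_zero.mp h1 with h | h
      · left; linarith
      · right; linarith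
    have hid1 : ∀ β : ℝ, Real.sin (2*μ + 2*β) = ε * Real.sin (2*β) := by
      intro β
      rw [Real.sin_add, hsμ, hε]
      ring
    have hid2 : ∀ β : ℝ, Real.sin (2*μ - 2*β) = -(ε * Real.sin (2*β)) := by
      intro β
      rw [Real.sin_sub, hsμ, hε]
      ring
    have hHval : ∀ (M : ℕ) (β : ℝ), Hfun μ y ℓ M β
        = ε * Real.sin (2*β) * (Real.exp (μ + β + 2*π*M) + Real.exp (μ - β))
          - 2 * Real.sin β * y / ℓ := by
      intro M β
      unfold Hfun
      rw [hid1, hid2]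
      ring
    obtain ⟨M, hM⟩ := exists_nat_ge (2*|y|/ℓ)
    have hMexp1 : 2*|y|/ℓ ≤ Real.exp (μ + π/4 + 2*π*M) :=
      le_trans hM (exp_ge_nat (μ + π/4) M (by linarith))
    have hMexp2 : 2*|y|/ℓ ≤ Real.exp (μ + 3*π/4 + 2*π*M) :=
      le_trans hM (exp_ge_nat (μ + 3*π/4) M (by linarith))
    have hsin14 : Real.sin (2*(π/4)) = 1 := by
      rw [show 2*(π/4) = π/2 by ring, Real.sin_pi_div_two]
    have hsin34 : Real.sin (2*(3*π/4)) = -1 := by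
      rw [show 2*(3*π/4) = π/2 + π by ring, Real.sin_add_pi, Real.sin_pi_div_two]
    have hsinq : Real.sin (π/4) = Real.sqrt 2 / 2 := Real.sin_pi_div_four
    have hsin3q : Real.sin (3*π/4) = Real.sqrt 2 / 2 := by
      rw [show 3*π/4 = π - π/4 by ring, Real.sin_pi_sub, Real.sin_pi_div_four]
    have hyabs : 2 * (Real.sqrt 2 / 2) * y / ℓ ≤ 2*|y|/ℓ ∧ -(2*|y|/ℓ) ≤ 2 * (Real.sqrt 2 / 2) * y / ℓ := by
      constructor
      · apply div_le_div_of_nonneg_right _ hℓ.le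
        nlinarith [sqrt_two_le_two, Real.sqrt_nonneg 2, abs_nonneg y, le_abs_self y]
      · rw [neg_le, ← neg_div]
        apply div_le_div_of_nonneg_right _ hℓ.le
        nlinarith [sqrt_two_le_two, Real.sqrt_nonneg 2, abs_nonneg y, neg_abs_le y]
    have hEpos1 : 0 < Real.exp (μ - π/4) := Real.exp_pos _
    have hEpos2 : 0 < Real.exp (μ - 3*π/4) := Real.exp_pos _
    have hq : π/4 ≤ 3*π/4 := by linarith
    rcases hεpm with hε1 | hε1
    · -- ε = 1 : H(π/4) > 0 > H(3π/4)
      have hv1 : 0 < Hfun μ y ℓ M (π/4) := by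
        rw [hHval, hsin14, hsinq, hε1]
        linarith [hyabs.1, hMexp1, hEpos1]
      have hv2 : Hfun μ y ℓ M (3*π/4) < 0 := by
        rw [hHval, hsin34, hsin3q, hε1]
        linarith [hyabs.2, hMexp2, hEpos2]
      obtain ⟨β', hβ'mem, hβ'0⟩ := intermediate_value_Icc' hq
        (Hfun_cont μ y ℓ M).continuousOn ⟨hv2.le, hv1.le⟩
      exact ⟨M, β', by nlinarith [hβ'mem.1], by nlinarith [hβ'mem.2], hβ'0⟩
    · -- ε = -1
      have hv1 : Hfun μ y ℓ M (π/4) < 0 := by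
        rw [hHval, hsin14, hsinq, hε1]
        linarith [hyabs.2, hMexp1, hEpos1]
      have hv2 : 0 < Hfun μ y ℓ M (3*π/4) := by
        rw [hHval, hsin34, hsin3q, hε1]
        linarith [hyabs.1, hMexp2, hEpos2]
      obtain ⟨β', hβ'mem, hβ'0⟩ := intermediate_value_Icc hq
        (Hfun_cont μ y ℓ M).continuousOn ⟨hv1.le, hv2.le⟩
      exact ⟨M, β', by nlinarith [hβ'mem.1], by nlinarith [hβ'mem.2], hβ'0⟩
  · -- sin 2μ ≠ 0
    have habs : 0 < |Real.sin (2*μ)| := abs_pos.mpr hsμ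
    obtain ⟨M, hM⟩ := exists_nat_ge
      ((2*|y|/ℓ + |Real.sin (2*μ)| * Real.exp (μ - π/2)) / |Real.sin (2*μ)|)
    have hMbig : 2*|y|/ℓ + |Real.sin (2*μ)| * Real.exp (μ - π/2)
        ≤ |Real.sin (2*μ)| * (M:ℝ) := by
      rw [div_le_iff₀ habs] at hM
      linarith
    have hexpM : (M:ℝ) ≤ Real.exp (μ + π/2 + 2*π*M) :=
      exp_ge_nat (μ + π/2) M (by linarith)
    have hkey : 2*|y|/ℓ + |Real.sin (2*μ)| * Real.exp (μ - π/2)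
        < |Real.sin (2*μ)| * Real.exp (μ + π/2 + 2*π*M) + 1 := by
      have := mul_le_mul_of_nonneg_left hexpM habs.le
      linarith
    -- H 0 and H (π/2)
    have hH0 : Hfun μ y ℓ M 0 = (Real.exp (μ + 0 + 2*π*M) - Real.exp (μ - 0)) * Real.sin (2*μ) := by
      unfold Hfun
      simp
      ring
    have hHpi2 : Hfun μ y ℓ M (π/2)
        = -Real.sin (2*μ) * (Real.exp (μ + π/2 + 2*π*M) - Real.exp (μ - π/2)) - 2*y/ℓ := by
      unfold Hfun
      rw [show 2*μ + 2*(π/2) = 2*μ + π by ring, Real.sin_add_pi,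
        show 2*μ - 2*(π/2) = 2*μ - π by ring, Real.sin_sub_pi, Real.sin_pi_div_two]
      ring
    obtain ⟨N, hN⟩ : ∃ N : ℕ, N = M + 1 := ⟨M + 1, rfl⟩
    have hNM : (M:ℝ) + 1 = (N:ℝ) := by rw [hN]; push_cast; ring
    have hexpN : (M:ℝ) + 1 ≤ Real.exp (μ + π/2 + 2*π*N) := by
      have := exp_ge_nat (μ + π/2) N (by linarith)
      linarith [this, hNM.le, hNM.ge]
    have hexp0 : Real.exp (μ - 0) < Real.exp (μ + 0 + 2*π*N) := by
      apply Real.exp_lt_exp.mpr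
      have hN1 : (1:ℝ) ≤ (N:ℝ) := by
        rw [hN]; push_cast; linarith [Nat.cast_nonneg (α := ℝ) M]
      have h2 : 0 < 2*π*(N:ℝ) := mul_pos (by linarith) (by linarith)
      linarith
    have hy2 : -(2*|y|/ℓ) ≤ 2*y/ℓ ∧ 2*y/ℓ ≤ 2*|y|/ℓ := by
      constructor
      · rw [neg_le, ← neg_div]
        apply div_le_div_of_nonneg_right _ hℓ.le
        nlinarith [neg_abs_le y]
      · apply div_le_div_of_nonneg_right _ hℓ.le
        nlinarith [le_abs_self y]
    have hH0N : Hfun μ y ℓ N 0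
        = (Real.exp (μ + 0 + 2*π*N) - Real.exp (μ - 0)) * Real.sin (2*μ) := by
      unfold Hfun
      simp
      ring
    have hHpi2N : Hfun μ y ℓ N (π/2)
        = -Real.sin (2*μ) * (Real.exp (μ + π/2 + 2*π*N) - Real.exp (μ - π/2)) - 2*y/ℓ := by
      unfold Hfun
      rw [show 2*μ + 2*(π/2) = 2*μ + π by ring, Real.sin_add_pi,
        show 2*μ - 2*(π/2) = 2*μ - π by ring, Real.sin_sub_pi, Real.sin_pi_div_two]
      ring
    have hq2 : (0:ℝ) ≤ π/2 := by linarith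
    rcases lt_or_gt_of_ne (hsμ : Real.sin (2*μ) ≠ 0) with hneg | hpos
    · -- sin 2μ < 0
      have habs' : |Real.sin (2*μ)| = -Real.sin (2*μ) := abs_of_neg hneg
      rw [habs'] at hMbig
      have hP1 : (-Real.sin (2*μ)) * ((M:ℝ)+1) ≤ (-Real.sin (2*μ)) * Real.exp (μ + π/2 + 2*π*N) :=
        mul_le_mul_of_nonneg_left hexpN (by linarith)
      have hv0 : Hfun μ y ℓ N 0 < 0 := by
        rw [hH0N]
        have h1 : 0 < Real.exp (μ + 0 + 2*π*N) - Real.exp (μ - 0) := by linarith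
        nlinarith
      have hv2 : 0 < Hfun μ y ℓ N (π/2) := by
        rw [hHpi2N]
        nlinarith [hy2.2, hMbig, hP1, hneg]
      obtain ⟨β', hβ'mem, hβ'0⟩ := intermediate_value_Icc hq2
        (Hfun_cont μ y ℓ N).continuousOn ⟨hv0.le, hv2.le⟩
      refine ⟨N, β', ?_, by linarith [hβ'mem.2], hβ'0⟩
      rcases eq_or_lt_of_le hβ'mem.1 with h | h
      · exfalso; rw [← h] at hβ'0; linarith
      · exact h
    · -- sin 2μ > 0
      have habs' : |Real.sin (2*μ)| = Real.sin (2*μ) := abs_of_pos hpos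
      rw [habs'] at hMbig
      have hP1 : Real.sin (2*μ) * ((M:ℝ)+1) ≤ Real.sin (2*μ) * Real.exp (μ + π/2 + 2*π*N) :=
        mul_le_mul_of_nonneg_left hexpN hpos.le
      have hv0 : 0 < Hfun μ y ℓ N 0 := by
        rw [hH0N]
        have h1 : 0 < Real.exp (μ + 0 + 2*π*N) - Real.exp (μ - 0) := by linarith
        nlinarith
      have hv2 : Hfun μ y ℓ N (π/2) < 0 := by
        rw [hHpi2N]
        nlinarith [hy2.1, hMbig, hP1, hpos]
      obtain ⟨β', hβ'mem, hβ'0⟩ := intermediate_value_Icc' hq2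
        (Hfun_cont μ y ℓ N).continuousOn ⟨hv2.le, hv0.le⟩
      refine ⟨N, β', ?_, by linarith [hβ'mem.2], hβ'0⟩
      rcases eq_or_lt_of_le hβ'mem.1 with h | h
      · exfalso; rw [← h] at hβ'0; linarith
      · exact h

lemma R_core (z : ℂ) (y : ℝ) : ∃ χ : ℝ, 0 < χ ∧ ∃ t s : ℝ, 0 ≤ t ∧ 0 ≤ s ∧
    Complex.exp ((t:ℂ) * Complex.I) - Complex.exp ((s:ℂ) * Complex.I) = (χ:ℂ) * z ∧
    Real.exp t * Real.sin (2*t) - Real.exp s * Real.sin (2*s) = χ * y := by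
  have hπ : (0:ℝ) < π := Real.pi_pos
  by_cases hz : z = 0
  · subst hz
    by_cases hy : y = 0
    · exact ⟨1, one_pos, 0, 0, le_refl _, le_refl _, by simp, by simp [hy]⟩
    rcases lt_or_gt_of_ne hy with hyneg | hypos
    · -- y < 0 : use s = 3π/4
      refine ⟨(Real.exp (3*π/4 + 2*π) - Real.exp (3*π/4))/(-y), ?_, 3*π/4 + 2*π, 3*π/4,
        by linarith, by linarith, ?_, ?_⟩
      · apply div_pos _ (by linarith)
        have : Real.exp (3*π/4) < Real.exp (3*π/4 + 2*π) := Real.exp_lt_exp.mpr (by linarith)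
        linarith
      · rw [show (3*π/4 + 2*π : ℝ) = 3*π/4 + 2*π*(1:ℕ) by push_cast; ring,
          exp_split, exp_two_pi_nat, mul_one, sub_self, mul_zero]
      · have h1 : Real.sin (2*(3*π/4 + 2*π)) = -1 := by
          rw [show 2*(3*π/4 + 2*π) = (π/2 + π) + (2:ℕ)*(2*π) by push_cast; ring,
            Real.sin_add_nat_mul_two_pi, Real.sin_add_pi, Real.sin_pi_div_two]
        have h2 : Real.sin (2*(3*π/4)) = -1 := by
          rw [show 2*(3*π/4) = π/2 + π by ring, Real.sin_add_pi, Real.sin_pi_div_two]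
        rw [h1, h2]
        field_simp [hy]
        ring
    · -- y > 0 : use s = π/4
      refine ⟨(Real.exp (π/4 + 2*π) - Real.exp (π/4))/y, ?_, π/4 + 2*π, π/4,
        by linarith, by linarith, ?_, ?_⟩
      · apply div_pos _ hypos
        have : Real.exp (π/4) < Real.exp (π/4 + 2*π) := Real.exp_lt_exp.mpr (by linarith)
        linarith
      · rw [show (π/4 + 2*π : ℝ) = π/4 + 2*π*(1:ℕ) by push_cast; ring,
          exp_split, exp_two_pi_nat, mul_one, sub_self, mul_zero]
      · have h1 : Real.sin (2*(π/4 + 2*π)) = 1 := by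
          rw [show 2*(π/4 + 2*π) = π/2 + (2:ℕ)*(2*π) by push_cast; ring,
            Real.sin_add_nat_mul_two_pi, Real.sin_pi_div_two]
        have h2 : Real.sin (2*(π/4)) = 1 := by
          rw [show 2*(π/4) = π/2 by ring, Real.sin_pi_div_two]
        rw [h1, h2]
        field_simp
  · -- z ≠ 0
    have hℓ : 0 < ‖z‖ := norm_pos_iff.mpr hz
    have hφl : -π < Complex.arg z := Complex.neg_pi_lt_arg z
    obtain ⟨M, β, hβ0, hβπ, hroot⟩ :=
      Hfun_root (Complex.arg z - π/2 + 4*π) y (‖z‖) hℓ (by linarith)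
    have hsinβ : 0 < Real.sin β := Real.sin_pos_of_pos_of_lt_pi hβ0 hβπ
    have h2πM : (0:ℝ) ≤ 2*π*M := by positivity
    refine ⟨2 * Real.sin β / ‖z‖, by positivity,
      (Complex.arg z - π/2 + 4*π) + β + 2*π*M, (Complex.arg z - π/2 + 4*π) - β,
      by linarith, by linarith, ?_, ?_⟩
    · rw [circle_chord (Complex.arg z) _ β M rfl]
      have hzne : (‖z‖ : ℂ) ≠ 0 := by exact_mod_cast hℓ.ne'
      calc 2 * (Real.sin β : ℂ) * Complex.exp ((Complex.arg z : ℂ) * Complex.I)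
          = ((2 * Real.sin β / ‖z‖ : ℝ) : ℂ)
            * (((‖z‖ : ℝ) : ℂ) * Complex.exp ((Complex.arg z : ℂ) * Complex.I)) := by
            push_cast
            field_simp
        _ = ((2 * Real.sin β / ‖z‖ : ℝ) : ℂ) * z := by
            rw [Complex.norm_mul_exp_arg_mul_I]
    · have h2t : Real.sin (2*((Complex.arg z - π/2 + 4*π) + β + 2*π*M))
          = Real.sin (2*(Complex.arg z - π/2 + 4*π) + 2*β) := by
        rw [show 2*((Complex.arg z - π/2 + 4*π) + β + 2*π*↑M)
            = (2*(Complex.arg z - π/2 + 4*π) + 2*β) + (2*M:ℕ)*(2*π) by push_cast; ring,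
          Real.sin_add_nat_mul_two_pi]
      have h2s : Real.sin (2*((Complex.arg z - π/2 + 4*π) - β))
          = Real.sin (2*(Complex.arg z - π/2 + 4*π) - 2*β) := by
        rw [show 2*((Complex.arg z - π/2 + 4*π) - β)
            = 2*(Complex.arg z - π/2 + 4*π) - 2*β by ring]
      rw [h2t, h2s]
      unfold Hfun at hroot
      have hr : 2 * Real.sin β / ‖z‖ * y
          = 2 * Real.sin β * y / ‖z‖ := by ring
      linarith [hroot, hr.le, hr.ge]

lemma spiral_diff (v : ℂ) : ∃ t s : ℝ, 0 ≤ t ∧ 0 ≤ s ∧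
    (t : ℂ) * Complex.exp ((t : ℂ) * Complex.I)
      - (s : ℂ) * Complex.exp ((s : ℂ) * Complex.I) = v := by
  rcases eq_or_ne v 0 with rfl | hv
  · exact ⟨0, 0, le_refl _, le_refl _, by simp⟩
  obtain ⟨t, s, ht, hs, heq⟩ := spiral_core (‖v‖) (Complex.arg v)
    (norm_pos_iff.mpr hv) (Complex.neg_pi_lt_arg v) (Complex.arg_le_pi v)
  exact ⟨t, s, ht, hs, by rw [heq, Complex.norm_mul_exp_arg_mul_I]⟩


/-- For `ℛ_r = 𝒮^{r−1} × ℛ ⊆ ℂ^{r−1} × ℂ × ℝ ≅ ℝ^{2r+1}`, where `𝒮` is the spiral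
`{t e^{it} : t ≥ 0}` and `ℛ = {(e^{it}, e^t sin 2t) : t ≥ 0}`, every vector of `ℝ^{2r+1}` is a
positive multiple of a secant of `ℛ_r`; equivalently `sec(ℛ_r) = S^{2r}`. -/
theorem secants_of_Rr_fill_sphere
    (r : ℕ) (hr : 0 < r)
    (S : Set ℂ)
    (hS : S = {ζ : ℂ | ∃ t : ℝ, 0 ≤ t ∧ ζ = (t : ℂ) * Complex.exp ((t : ℂ) * Complex.I)})
    (R : Set (ℂ × ℝ))
    (hR : R = {p : ℂ × ℝ | ∃ t : ℝ, 0 ≤ t ∧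
      p = (Complex.exp ((t : ℂ) * Complex.I), Real.exp t * Real.sin (2 * t))})
    (Rr : Set ((Fin (r - 1) → ℂ) × ℂ × ℝ))
    (hRr : Rr = {p | (∀ i, p.1 i ∈ S) ∧ p.2 ∈ R}) :
    ∀ w : (Fin (r - 1) → ℂ) × ℂ × ℝ,
      ∃ a₁ ∈ Rr, ∃ a₂ ∈ Rr, ∃ χ : ℝ, 0 < χ ∧ a₁ - a₂ = χ • w := by
  intro w
  obtain ⟨χ, hχ, t, s, ht, hs, hC, hR2⟩ := R_core w.2.1 w.2.2
  choose Tf Sf hTf hSf hdiff using fun i : Fin (r-1) => spiral_diff ((χ:ℂ) * w.1 i)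
  refine ⟨⟨fun i => (Tf i : ℂ) * Complex.exp ((Tf i : ℂ) * Complex.I),
      Complex.exp ((t:ℂ) * Complex.I), Real.exp t * Real.sin (2*t)⟩, ?_,
    ⟨fun i => (Sf i : ℂ) * Complex.exp ((Sf i : ℂ) * Complex.I),
      Complex.exp ((s:ℂ) * Complex.I), Real.exp s * Real.sin (2*s)⟩, ?_, χ, hχ, ?_⟩
  · rw [hRr]
    refine ⟨fun i => ?_, ?_⟩
    · rw [hS]; exact ⟨Tf i, hTf i, rfl⟩
    · rw [hR]; exact ⟨t, ht, rfl⟩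
  · rw [hRr]
    refine ⟨fun i => ?_, ?_⟩
    · rw [hS]; exact ⟨Sf i, hSf i, rfl⟩
    · rw [hR]; exact ⟨s, hs, rfl⟩
  · refine Prod.ext ?_ (Prod.ext ?_ ?_)
    · funext i
      have h1 : ((fun i => (Tf i : ℂ) * Complex.exp ((Tf i : ℂ) * Complex.I))
          - (fun i => (Sf i : ℂ) * Complex.exp ((Sf i : ℂ) * Complex.I))) i
          = (Tf i : ℂ) * Complex.exp ((Tf i : ℂ) * Complex.I)
            - (Sf i : ℂ) * Complex.exp ((Sf i : ℂ) * Complex.I) := rfl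
      show _ = (χ • w.1) i
      rw [Pi.smul_apply]
      have h2 : χ • w.1 i = (χ:ℂ) * w.1 i := Complex.real_smul
      rw [h2]
      exact (h1.trans (hdiff i))
    · show Complex.exp ((t:ℂ) * Complex.I) - Complex.exp ((s:ℂ) * Complex.I) = χ • w.2.1
      rw [Complex.real_smul]
      exact hC
    · show Real.exp t * Real.sin (2*t) - Real.exp s * Real.sin (2*s) = χ • w.2.2
      rw [smul_eq_mul]
      exact hR2
end
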